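/- arXiv:2302.09946 — 7 statements merged into one kernel-verified Lean document; each statement's English description precedes it below -/
import Mathlib

section
/- Let σ > 0, let X be a real random variable with law N(0,σ²) and let Y be an ℝ^d-valued random variable on the same probability space such that X and Y are independent. Then for every continuously differentiable function f : ℝ × ℝ^d → ℝ such that f and ∂_x f are bounded, one has σ² · E[∂_x f(X,Y)] = E[X · f(X,Y)]. -/
/-! Stein's lemma. For the density `φ` of `N(m, v)` one has `v φ' = -(x - m) φ`, so integrating
`g'` against `v φ` by parts gives `∫ (x - m) g dN(m, v)`; the boundary terms disappear because
`g φ` is integrable. Independence makes the law of `(X, Y)` the product `N(m, v) ⊗ law(Y)`, and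
Fubini reduces the claim to this one-dimensional identity on every slice `y = const`. -/

open MeasureTheory ProbabilityTheory Real
open scoped NNReal

theorem ContDiff.continuous_deriv_comp_prodMk {𝕜 E F : Type*} [NontriviallyNormedField 𝕜]
    [NormedAddCommGroup E] [NormedSpace 𝕜 E] [NormedAddCommGroup F] [NormedSpace 𝕜 F]
    {f : 𝕜 × E → F} (hf : ContDiff 𝕜 1 f) :
    Continuous fun p : 𝕜 × E => deriv (fun t => f (t, p.2)) p.1 := by
  have hpartial : (fun p : 𝕜 × E => deriv (fun t => f (t, p.2)) p.1)
      = fun p => fderiv 𝕜 f p (1, 0) := funext fun p =>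
    ((hf.differentiable one_ne_zero p).hasFDerivAt.comp_hasDerivAt p.1
      ((hasDerivAt_id p.1).prodMk (hasDerivAt_const p.1 p.2))).deriv
  rw [hpartial]
  exact (hf.continuous_fderiv one_ne_zero).clm_apply continuous_const

namespace ProbabilityTheory

lemma integrable_sub_const_gaussianReal (m : ℝ) (v : ℝ≥0) :
    Integrable (fun x => x - m) (gaussianReal m v) :=
  ((memLp_id_gaussianReal 1).integrable le_rfl).sub (integrable_const m)

lemma hasDerivAt_gaussianPDFReal (m : ℝ) (v : ℝ≥0) (x : ℝ) :
    HasDerivAt (gaussianPDFReal m v) (-((x - m) / v) * gaussianPDFReal m v x) x := by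
  have hexp : HasDerivAt (fun x => -(x - m) ^ 2 / (2 * v)) (-(2 * (x - m)) / (2 * v)) x := by
    simpa using (((hasDerivAt_id x).sub_const m).pow 2).neg.div_const (2 * (v : ℝ))
  rw [gaussianPDFReal_def]
  refine (hexp.exp.const_mul (√(2 * π * v))⁻¹).congr_deriv ?_
  by_cases hv : (v : ℝ) = 0
  · simp [hv]
  · field_simp

lemma integrable_gaussianPDFReal_smul {E : Type*} [NormedAddCommGroup E] [NormedSpace ℝ E]
    {m : ℝ} {v : ℝ≥0} (hv : v ≠ 0) {f : ℝ → E} (hf : Integrable f (gaussianReal m v)) :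
    Integrable (fun x => gaussianPDFReal m v x • f x) := by
  rw [gaussianReal_of_var_ne_zero m hv, integrable_withDensity_iff_integrable_smul'
    (measurable_gaussianPDF m v) (ae_of_all _ fun _ => gaussianPDF_lt_top)] at hf
  simpa using hf

variable {β : Type*} [MeasurableSpace β] {m : ℝ} {v : ℝ≥0}

theorem variance_mul_integral_deriv_gaussianReal {g : ℝ → ℝ}
    (hg : Differentiable ℝ g) {C C' : ℝ} (hgC : ∀ x, |g x| ≤ C) (hg'C : ∀ x, |deriv g x| ≤ C') :
    v * ∫ x, deriv g x ∂gaussianReal m v = ∫ x, (x - m) * g x ∂gaussianReal m v := by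
  rcases eq_or_ne v 0 with rfl | hv
  · simp [gaussianReal_zero_var]
  simp only [integral_gaussianReal_eq_integral_smul hv, smul_eq_mul]
  set φ := gaussianPDFReal m v
  have hφ : Integrable φ := integrable_gaussianPDFReal m v
  have hxφ : Integrable fun x => φ x * (x - m) :=
    integrable_gaussianPDFReal_smul hv (integrable_sub_const_gaussianReal m v)
  have ibp := integral_mul_deriv_eq_deriv_mul_of_integrable
    (u := g) (v := φ) (u' := deriv g) (v' := fun x => -((x - m) / v) * φ x)
    (fun x _ => (hg x).hasDerivAt) (fun x _ => hasDerivAt_gaussianPDFReal m v x)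
    ?_ ?_ ?_
  · calc (v : ℝ) * ∫ x, φ x * deriv g x = -(v * -∫ x, deriv g x * φ x) := by
          simp only [mul_comm (φ _)]; ring
      _ = -(v * ∫ x, g x * (-((x - m) / v) * φ x)) := by rw [ibp]
      _ = ∫ x, φ x * ((x - m) * g x) := by
          rw [← integral_const_mul, ← integral_neg]
          congr 1 with x
          field_simp
  · refine ((hxφ.bdd_mul hg.continuous.aestronglyMeasurable (ae_of_all _ hgC)).const_mul
      (-(v : ℝ)⁻¹)).congr (ae_of_all _ fun x => ?_)
    simp only [Pi.mul_apply]
    ring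
  · exact hφ.bdd_mul (measurable_deriv g).aestronglyMeasurable (ae_of_all _ hg'C)
  · exact hφ.bdd_mul hg.continuous.aestronglyMeasurable (ae_of_all _ hgC)

theorem variance_mul_integral_deriv_prod_gaussianReal (ν : Measure β) [IsFiniteMeasure ν]
    {f : ℝ × β → ℝ} (hf : ∀ y, Differentiable ℝ fun t => f (t, y))
    (hfm : AEStronglyMeasurable f ((gaussianReal m v).prod ν))
    (hdm : AEStronglyMeasurable (fun p => deriv (fun t => f (t, p.2)) p.1)
      ((gaussianReal m v).prod ν))
    {C C' : ℝ} (hfC : ∀ p, |f p| ≤ C) (hdC : ∀ x y, |deriv (fun t => f (t, y)) x| ≤ C') :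
    v * ∫ p, deriv (fun t => f (t, p.2)) p.1 ∂(gaussianReal m v).prod ν
      = ∫ p, (p.1 - m) * f p ∂(gaussianReal m v).prod ν := by
  have hd_int : Integrable (fun p => deriv (fun t => f (t, p.2)) p.1)
      ((gaussianReal m v).prod ν) :=
    .of_bound hdm C' (ae_of_all _ fun p => hdC p.1 p.2)
  have hf_int : Integrable (fun p => (p.1 - m) * f p) ((gaussianReal m v).prod ν) :=
    ((integrable_sub_const_gaussianReal m v).comp_fst ν).mul_bdd hfm (ae_of_all _ hfC)
  calc (v : ℝ) * ∫ p, deriv (fun t => f (t, p.2)) p.1 ∂(gaussianReal m v).prod ν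
      = ∫ y, v * ∫ x, deriv (fun t => f (t, y)) x ∂gaussianReal m v ∂ν := by
        rw [integral_prod_symm _ hd_int, integral_const_mul]
    _ = ∫ y, ∫ x, (x - m) * f (x, y) ∂gaussianReal m v ∂ν := by
        congr 1 with y
        exact variance_mul_integral_deriv_gaussianReal (hf y) (fun x => hfC (x, y))
          (fun x => hdC x y)
    _ = ∫ p, (p.1 - m) * f p ∂(gaussianReal m v).prod ν := (integral_prod_symm _ hf_int).symm

theorem variance_mul_integral_deriv_of_indepFun {Ω : Type*} [MeasurableSpace Ω]
    {P : Measure Ω} [IsProbabilityMeasure P] {X : Ω → ℝ} {Y : Ω → β}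
    (hX : AEMeasurable X P) (hY : AEMeasurable Y P) (hlaw : P.map X = gaussianReal m v)
    (hindep : IndepFun X Y P) {f : ℝ × β → ℝ} (hf : ∀ y, Differentiable ℝ fun t => f (t, y))
    (hfm : StronglyMeasurable f)
    (hdm : StronglyMeasurable fun p : ℝ × β => deriv (fun t => f (t, p.2)) p.1)
    {C C' : ℝ} (hfC : ∀ p, |f p| ≤ C) (hdC : ∀ x y, |deriv (fun t => f (t, y)) x| ≤ C') :
    v * ∫ ω, deriv (fun t => f (t, Y ω)) (X ω) ∂P = ∫ ω, (X ω - m) * f (X ω, Y ω) ∂P := by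
  have hjoint : P.map (fun ω => (X ω, Y ω)) = (gaussianReal m v).prod (P.map Y) := by
    rw [hindep.map_prod_eq_prod_map_map hX hY, hlaw]
  have hXY : AEMeasurable (fun ω => (X ω, Y ω)) P := hX.prodMk hY
  have hxfm : StronglyMeasurable fun p : ℝ × β => (p.1 - m) * f p :=
    (measurable_fst.sub_const m).stronglyMeasurable.mul hfm
  rw [← integral_map hXY hdm.aestronglyMeasurable, ← integral_map (f := fun p => (p.1 - m) * f p)
    hXY hxfm.aestronglyMeasurable, hjoint]
  exact variance_mul_integral_deriv_prod_gaussianReal _ hf hfm.aestronglyMeasurable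
    hdm.aestronglyMeasurable hfC hdC

end ProbabilityTheory

theorem stmt0_general {d : ℕ} {Ω : Type*} [MeasureSpace Ω]
    [IsProbabilityMeasure (ℙ : Measure Ω)]
    (σ : ℝ)
    (X : Ω → ℝ) (Y : Ω → EuclideanSpace ℝ (Fin d))
    (hX : Measurable X) (hY : Measurable Y)
    (hlaw : Measure.map X ℙ = gaussianReal 0 ⟨σ ^ 2, sq_nonneg σ⟩)
    (hindep : IndepFun X Y ℙ)
    (f : ℝ × EuclideanSpace ℝ (Fin d) → ℝ)
    (hf : ContDiff ℝ 1 f)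
    (hfB : ∃ C : ℝ, ∀ p, |f p| ≤ C)
    (hdB : ∃ C : ℝ, ∀ (x : ℝ) (y : EuclideanSpace ℝ (Fin d)),
      |deriv (fun t => f (t, y)) x| ≤ C) :
    σ ^ 2 * ∫ ω, deriv (fun t => f (t, Y ω)) (X ω) ∂ℙ
      = ∫ ω, X ω * f (X ω, Y ω) ∂ℙ := by
  obtain ⟨C, hfC⟩ := hfB
  obtain ⟨C', hdC⟩ := hdB
  have hf_slice (y : EuclideanSpace ℝ (Fin d)) : Differentiable ℝ fun t => f (t, y) :=
    (hf.differentiable one_ne_zero).comp (differentiable_id.prodMk (differentiable_const y))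
  have stein := variance_mul_integral_deriv_of_indepFun hX.aemeasurable hY.aemeasurable hlaw
    hindep hf_slice hf.continuous.stronglyMeasurable
    hf.continuous_deriv_comp_prodMk.stronglyMeasurable hfC hdC
  simp only [sub_zero] at stein
  exact stein

/-- If `X ~ N(0, σ²)` and `X` is independent of the `ℝ^d`-valued random
variable `Y`, then for every continuously differentiable `f : ℝ × ℝ^d → ℝ` such that `f` and
`∂_x f` are bounded, one has `σ² ⬝ E[∂_x f(X,Y)] = E[X ⬝ f(X,Y)]`. -/
theorem stmt0 {d : ℕ} (hd : 1 ≤ d) {Ω : Type*} [MeasureSpace Ω]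
    [IsProbabilityMeasure (ℙ : Measure Ω)]
    (σ : ℝ) (hσ : 0 < σ)
    (X : Ω → ℝ) (Y : Ω → EuclideanSpace ℝ (Fin d))
    (hX : Measurable X) (hY : Measurable Y)
    (hlaw : Measure.map X ℙ = gaussianReal 0 ⟨σ ^ 2, sq_nonneg σ⟩)
    (hindep : IndepFun X Y ℙ)
    (f : ℝ × EuclideanSpace ℝ (Fin d) → ℝ)
    (hf : ContDiff ℝ 1 f)
    (hfB : ∃ C : ℝ, ∀ p, |f p| ≤ C)
    (hdB : ∃ C : ℝ, ∀ (x : ℝ) (y : EuclideanSpace ℝ (Fin d)),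
      |deriv (fun t => f (t, y)) x| ≤ C) :
    σ ^ 2 * ∫ ω, deriv (fun t => f (t, Y ω)) (X ω) ∂ℙ
      = ∫ ω, X ω * f (X ω, Y ω) ∂ℙ :=
  stmt0_general σ X Y hX hY hlaw hindep f hf hfB hdB
end

section
/- Let σ > 0, let X be an integrable real random variable and Y an ℝ^d-valued random variable on the same probability space. Assume that for every continuously differentiable function f : ℝ × ℝ^d → ℝ such that f and ∂_x f are bounded one has E[σ² · ∂_x f(X,Y) − X · f(X,Y)] = 0. Then X has law N(0,σ²) and X is independent of Y. -/
/-!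
Applying the Stein identity to `f(x, y) = cos (s x + ℓ y)` and `sin (s x + ℓ y)`, for a continuous
linear form `ℓ`, gives `E[X e^{i(sX + ℓY)}] = i σ² s E[e^{i(sX + ℓY)}]`. Since `X` is integrable,
`φ(s) = E[e^{i(sX + ℓY)}]` is differentiable with `φ'(s) = i E[X e^{i(sX + ℓY)}] = -σ² s φ(s)`,
hence `φ(s) = e^{-σ² s² / 2} E[e^{iℓY}]`. So the joint characteristic function of `(X, Y)` is that
of `N(0, σ²) ⊗ law(Y)`, which gives both the law of `X` and the independence.
-/

open MeasureTheory ProbabilityTheory Complex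
open scoped NNReal

lemma eq_mul_cexp_of_hasDerivAt {φ : ℝ → ℂ} {c : ℂ}
    (hφ : ∀ s, HasDerivAt φ (-(c * s) * φ s) s) (s : ℝ) :
    φ s = φ 0 * cexp (-(c * s ^ 2 / 2)) := by
  have hψ : ∀ s : ℝ, HasDerivAt (fun s : ℝ => φ s * cexp (c * (s : ℂ) ^ 2 / 2)) 0 s := by
    intro s
    have hq : HasDerivAt (fun s : ℝ => c * (s : ℂ) ^ 2 / 2) (c * s) s := by
      convert (((hasDerivAt_pow 2 (s : ℂ)).const_mul c).div_const 2).comp_ofReal using 1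
      ring
    exact ((hφ s).mul hq.cexp).congr_deriv (by ring)
  have hconst := is_const_of_deriv_eq_zero (fun s => (hψ s).differentiableAt)
    (fun s => (hψ s).deriv) s 0
  calc φ s = φ s * cexp (c * s ^ 2 / 2) * cexp (-(c * s ^ 2 / 2)) := by
        rw [mul_assoc, ← Complex.exp_add, add_neg_cancel, Complex.exp_zero, mul_one]
    _ = φ 0 * cexp (-(c * s ^ 2 / 2)) := by simp [hconst]

lemma hasDerivAt_integral_cexp_mul_add {Ω : Type*} [MeasurableSpace Ω] {μ : Measure Ω}
    [IsFiniteMeasure μ] {X Z : Ω → ℝ} (hX : Integrable X μ) (hZ : AEStronglyMeasurable Z μ)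
    (s : ℝ) :
    HasDerivAt (fun s : ℝ => ∫ ω, cexp (↑(s * X ω + Z ω) * I) ∂μ)
      (I * ∫ ω, X ω * cexp (↑(s * X ω + Z ω) * I) ∂μ) s := by
  have hmeas : ∀ s : ℝ, AEStronglyMeasurable (fun ω => cexp (↑(s * X ω + Z ω) * I)) μ :=
    fun s => by fun_prop
  rw [← integral_const_mul]
  refine (hasDerivAt_integral_of_dominated_loc_of_deriv_le (x₀ := s)
    (F' := fun s ω => I * (X ω * cexp (↑(s * X ω + Z ω) * I))) (bound := fun ω => ‖X ω‖)
    Filter.univ_mem (Filter.Eventually.of_forall hmeas) ?_ ?_ ?_ hX.norm ?_).2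
  · exact (integrable_const (1 : ℝ)).mono' (hmeas s)
      (Filter.Eventually.of_forall fun ω => (norm_exp_ofReal_mul_I _).le)
  · fun_prop
  · refine Filter.Eventually.of_forall fun ω t _ => ?_
    rw [norm_mul, norm_mul, norm_I, one_mul, norm_exp_ofReal_mul_I, mul_one, norm_real]
  · refine Filter.Eventually.of_forall fun ω t _ => ?_
    have hlin : HasDerivAt (fun t : ℝ => (↑(t * X ω + Z ω) : ℂ) * I) (X ω * I) t := by
      simpa using ((((hasDerivAt_id t).mul_const (X ω)).add_const (Z ω)).ofReal_comp).mul_const I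
    exact hlin.cexp.congr_deriv (by ring)

section Stein

variable {Ω E : Type*} [MeasurableSpace Ω] [NormedAddCommGroup E] [NormedSpace ℝ E]

def SatisfiesSteinIdentity (v : ℝ) (X : Ω → ℝ) (Y : Ω → E) (P : Measure Ω) : Prop :=
  ∀ f : ℝ × E → ℝ, ContDiff ℝ 1 f → (∃ C : ℝ, ∀ p, |f p| ≤ C) →
    (∃ C : ℝ, ∀ (x : ℝ) (y : E), |deriv (fun t => f (t, y)) x| ≤ C) →
    ∫ ω, (v * deriv (fun t => f (t, Y ω)) (X ω) - X ω * f (X ω, Y ω)) ∂P = 0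

variable {v : ℝ} {X : Ω → ℝ} {Y : Ω → E} {P : Measure Ω}

lemma SatisfiesSteinIdentity.integral_comp_add_eq_zero (hS : SatisfiesSteinIdentity v X Y P)
    {u : ℝ → ℝ} (hu : ContDiff ℝ 1 u) {C C' : ℝ} (hC : ∀ x, |u x| ≤ C)
    (hC' : ∀ x, |deriv u x| ≤ C')
    (s : ℝ) (ℓ : StrongDual ℝ E) :
    ∫ ω, (v * (s * deriv u (s * X ω + ℓ (Y ω))) - X ω * u (s * X ω + ℓ (Y ω))) ∂P = 0 := by
  have hderiv : ∀ x y, deriv (fun t => u (s * t + ℓ y)) x = s * deriv u (s * x + ℓ y) := by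
    intro x y
    exact ((((hu.differentiable one_ne_zero _).hasDerivAt).comp x
      (((hasDerivAt_id' x).const_mul s).add_const (ℓ y))).congr_deriv (by ring)).deriv
  have := hS (fun p => u (s * p.1 + ℓ p.2)) (hu.comp (by fun_prop)) ⟨C, fun p => hC _⟩
    ⟨|s| * C', fun x y => by
      rw [hderiv, abs_mul]
      exact mul_le_mul_of_nonneg_left (hC' _) (abs_nonneg s)⟩
  simpa only [hderiv] using this

lemma SatisfiesSteinIdentity.integral_mul_cexp [IsFiniteMeasure P] [MeasurableSpace E]
    [OpensMeasurableSpace E] (hS : SatisfiesSteinIdentity v X Y P) (hX : Measurable X)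
    (hY : Measurable Y) (hXi : Integrable X P) (s : ℝ) (ℓ : StrongDual ℝ E) :
    ∫ ω, X ω * cexp (↑(s * X ω + ℓ (Y ω)) * I) ∂P
      = v * s * I * ∫ ω, cexp (↑(s * X ω + ℓ (Y ω)) * I) ∂P := by
  set θ : Ω → ℝ := fun ω => s * X ω + ℓ (Y ω)
  change ∫ ω, X ω * cexp (↑(θ ω) * I) ∂P = v * s * I * ∫ ω, cexp (↑(θ ω) * I) ∂P
  have hcos := hS.integral_comp_add_eq_zero Real.contDiff_cos Real.abs_cos_le_one
    (C' := 1) (fun x => by simp [Real.abs_sin_le_one]) s ℓ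
  have hsin := hS.integral_comp_add_eq_zero Real.contDiff_sin Real.abs_sin_le_one
    (C' := 1) (fun x => by simp [Real.abs_cos_le_one]) s ℓ
  have hexp : Integrable (fun ω => cexp (↑(θ ω) * I)) P :=
    (integrable_const (1 : ℝ)).mono' (by fun_prop)
      (Filter.Eventually.of_forall fun ω => (norm_exp_ofReal_mul_I _).le)
  have hXexp : Integrable (fun ω => X ω * cexp (↑(θ ω) * I)) P :=
    hXi.norm.mono' (by fun_prop) (Filter.Eventually.of_forall fun ω => by
      rw [norm_mul, norm_exp_ofReal_mul_I, mul_one, norm_real])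
  rw [← sub_eq_zero, ← integral_const_mul, ← integral_sub hXexp (hexp.const_mul _)]
  have hG : Integrable (fun ω => X ω * cexp (↑(θ ω) * I) - v * s * I * cexp (↑(θ ω) * I)) P :=
    hXexp.sub (hexp.const_mul _)
  apply Complex.ext
  · rw [← RCLike.re_to_complex, ← integral_re hG, zero_re, ← neg_eq_zero, ← integral_neg, ← hcos]
    congr 1 with ω
    simp only [RCLike.re_to_complex, sub_re, mul_re, mul_im, ofReal_re, ofReal_im,
      I_re, I_im, exp_ofReal_mul_I_re, exp_ofReal_mul_I_im, Real.deriv_cos', θ]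
    ring
  · rw [← RCLike.im_to_complex, ← integral_im hG, zero_im, ← neg_eq_zero, ← integral_neg, ← hsin]
    congr 1 with ω
    simp only [RCLike.im_to_complex, sub_im, mul_re, mul_im, ofReal_re, ofReal_im,
      I_re, I_im, exp_ofReal_mul_I_re, exp_ofReal_mul_I_im, Real.deriv_sin, θ]
    ring

theorem SatisfiesSteinIdentity.map_prod_eq_gaussianReal_prod [IsFiniteMeasure P]
    [MeasurableSpace E] [BorelSpace E] [CompleteSpace E] [SecondCountableTopology E] {v : ℝ≥0}
    (hS : SatisfiesSteinIdentity v X Y P) (hX : Measurable X) (hY : Measurable Y)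
    (hXi : Integrable X P) :
    P.map (fun ω => (X ω, Y ω)) = (gaussianReal 0 v).prod (P.map Y) := by
  rw [← charFunDual_eq_prod_iff]
  intro L
  set ℓ := L.comp (.inr ℝ ℝ E)
  set a := L.comp (.inl ℝ ℝ E) 1
  set φ : ℝ → ℂ := fun s => ∫ ω, cexp (↑(s * X ω + ℓ (Y ω)) * I) ∂P
  have hφ : ∀ s, HasDerivAt φ (-(↑v * s) * φ s) s := by
    intro s
    refine (hasDerivAt_integral_cexp_mul_add (Z := fun ω => ℓ (Y ω)) hXi (by fun_prop)
      s).congr_deriv ?_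
    rw [hS.integral_mul_cexp hX hY hXi s ℓ]
    linear_combination (↑v * ↑s * φ s) * I_sq
  have hinl : ∀ x, L.comp (.inl ℝ ℝ E) x = a * x := fun x => by
    rw [mul_comm, ← smul_eq_mul, ← map_smul, smul_eq_mul, mul_one]
  have hγ : charFunDual (gaussianReal 0 v) (L.comp (.inl ℝ ℝ E))
      = cexp (-(↑v * a ^ 2 / 2)) := by
    have := charFun_gaussianReal (μ := 0) (v := v) a
    rw [charFun_apply_real] at this
    simp_rw [charFunDual_apply, hinl, ofReal_mul, this]
    simp
  have hcharY : charFunDual (P.map Y) ℓ = φ 0 := by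
    rw [charFunDual_apply, integral_map hY.aemeasurable (by fun_prop)]
    simp [φ]
  rw [hγ, hcharY, charFunDual_apply, integral_map (by fun_prop) (by fun_prop), mul_comm,
    ← eq_mul_cexp_of_hasDerivAt hφ a]
  simp only [← L.comp_inl_add_comp_inr, hinl, φ]
  rfl

end Stein

theorem stmt1_general {d : ℕ} {Ω : Type*} [MeasureSpace Ω]
    [IsProbabilityMeasure (ℙ : Measure Ω)]
    (σ : ℝ)
    (X : Ω → ℝ) (Y : Ω → EuclideanSpace ℝ (Fin d))
    (hX : Measurable X) (hY : Measurable Y)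
    (hXint : Integrable X ℙ)
    (hstein : ∀ f : ℝ × EuclideanSpace ℝ (Fin d) → ℝ, ContDiff ℝ 1 f →
      (∃ C : ℝ, ∀ p, |f p| ≤ C) →
      (∃ C : ℝ, ∀ (x : ℝ) (y : EuclideanSpace ℝ (Fin d)),
        |deriv (fun t => f (t, y)) x| ≤ C) →
      ∫ ω, (σ ^ 2 * deriv (fun t => f (t, Y ω)) (X ω) - X ω * f (X ω, Y ω)) ∂ℙ = 0) :
    Measure.map X ℙ = gaussianReal 0 ⟨σ ^ 2, sq_nonneg σ⟩ ∧ IndepFun X Y ℙ := by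
  have hjoint := SatisfiesSteinIdentity.map_prod_eq_gaussianReal_prod
    (v := ⟨σ ^ 2, sq_nonneg σ⟩) hstein hX hY hXint
  have : IsProbabilityMeasure (Measure.map Y ℙ) :=
    Measure.isProbabilityMeasure_map hY.aemeasurable
  have hlaw : Measure.map X ℙ = gaussianReal 0 ⟨σ ^ 2, sq_nonneg σ⟩ := by
    rw [← Measure.fst_map_prodMk hY, hjoint, Measure.fst_prod]
  refine ⟨hlaw, ?_⟩
  rw [indepFun_iff_map_prod_eq_prod_map_map hX.aemeasurable hY.aemeasurable, hlaw]
  exact hjoint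

/-- If `X` is integrable and for every continuously differentiable
`f : ℝ × ℝ^d → ℝ` with `f` and `∂_x f` bounded one has
`E[σ² ⬝ ∂_x f(X,Y) − X ⬝ f(X,Y)] = 0`, then `X ~ N(0, σ²)` and `X` is independent of `Y`. -/
theorem stmt1 {d : ℕ} (hd : 1 ≤ d) {Ω : Type*} [MeasureSpace Ω]
    [IsProbabilityMeasure (ℙ : Measure Ω)]
    (σ : ℝ) (hσ : 0 < σ)
    (X : Ω → ℝ) (Y : Ω → EuclideanSpace ℝ (Fin d))
    (hX : Measurable X) (hY : Measurable Y)
    (hXint : Integrable X ℙ)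
    (hstein : ∀ f : ℝ × EuclideanSpace ℝ (Fin d) → ℝ, ContDiff ℝ 1 f →
      (∃ C : ℝ, ∀ p, |f p| ≤ C) →
      (∃ C : ℝ, ∀ (x : ℝ) (y : EuclideanSpace ℝ (Fin d)),
        |deriv (fun t => f (t, y)) x| ≤ C) →
      ∫ ω, (σ ^ 2 * deriv (fun t => f (t, Y ω)) (X ω) - X ω * f (X ω, Y ω)) ∂ℙ = 0) :
    Measure.map X ℙ = gaussianReal 0 ⟨σ ^ 2, sq_nonneg σ⟩ ∧ IndepFun X Y ℙ :=
  stmt1_general σ X Y hX hY hXint hstein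
end

section
/- Let h : ℝ × ℝ^d → ℝ be continuously differentiable with bounded partial derivatives. Then the function f_h satisfies the Stein equation: for all x ∈ ℝ and y ∈ ℝ^d, σ² · ∂_x f_h(x,y) − x · f_h(x,y) = h(x,y) − E[h(Z,y)], where E[h(Z,y)] = ∫ h(z,y) dN(0,σ²)(z). -/
open MeasureTheory ProbabilityTheory

/-- The Stein solution `f_h` associated to `h : ℝ × ℝ^d → ℝ`:
`f_h(x,y) = −(1/σ²) ∫₀¹ (2√(t(1−t)))⁻¹ ⬝ E[Z ⬝ h(√t x + √(1−t) Z, y)] dt`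
where `Z ~ N(0, σ²)`. -/
noncomputable def steinSol {d : ℕ} (σ : ℝ)
    (h : ℝ × EuclideanSpace ℝ (Fin d) → ℝ)
    (x : ℝ) (y : EuclideanSpace ℝ (Fin d)) : ℝ :=
  -(1 / σ ^ 2) * ∫ t in (0:ℝ)..1, (2 * Real.sqrt (t * (1 - t)))⁻¹ *
    ∫ z, z * h (Real.sqrt t * x + Real.sqrt (1 - t) * z, y)
      ∂(gaussianReal 0 ⟨σ ^ 2, sq_nonneg σ⟩)

/-!
Fix `y`, write `g = h(·, y)` and `v = σ²`, and follow the smart path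
`G(t) = E[g(√t x + √(1-t) Z)]` from `G 0 = E[g(Z)]` to `G 1 = g(x)`. Differentiating under the
expectation,
`G'(t) = x E[g'(√t x + √(1-t) Z)] / (2√t) - E[Z g'(√t x + √(1-t) Z)] / (2√(1-t))`.
By Stein's lemma `E[Z φ(Z)] = v E[φ'(Z)]`, the first term equals `x/v` times the integrand
`E[Z g(…)] / (2√(t(1-t)))` of `-v f_h`, so it integrates to `-x f_h(x)`; since
`∂ₓ E[Z g(…)] = √t E[Z g'(…)]`, the second term integrates to `v ∂ₓ f_h(x)`.
Hence `g(x) - E[g(Z)] = G 1 - G 0 = v ∂ₓ f_h(x) - x f_h(x)`.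
-/

open Real Set Filter
open scoped NNReal

section GaussianStein

variable {μ : ℝ} {v : ℝ≥0}

lemma integrable_one_add_sq_gaussianReal :
    Integrable (fun z : ℝ => 1 + z ^ 2) (gaussianReal μ v) :=
  (integrable_const 1).add (memLp_id_gaussianReal 2).integrable_sq

lemma integrable_gaussianReal_of_abs_le {f : ℝ → ℝ}
    (hf : AEStronglyMeasurable f (gaussianReal μ v)) {K : ℝ} (hK : ∀ z, |f z| ≤ K * (1 + z ^ 2)) :
    Integrable f (gaussianReal μ v) :=
  (integrable_one_add_sq_gaussianReal.const_mul K).mono' hf (ae_of_all _ hK)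

lemma integrable_gaussianReal_iff (hv : v ≠ 0) {f : ℝ → ℝ} :
    Integrable f (gaussianReal μ v) ↔ Integrable (fun z => gaussianPDFReal μ v z * f z) := by
  rw [gaussianReal_of_var_ne_zero _ hv, integrable_withDensity_iff_integrable_smul'
    (measurable_gaussianPDF _ _) (ae_of_all _ fun _ => gaussianPDF_lt_top)]
  simp [toReal_gaussianPDF]

lemma hasDerivAt_gaussianPDFReal (hv : v ≠ 0) (z : ℝ) :
    HasDerivAt (gaussianPDFReal μ v) (-((z - μ) / v) * gaussianPDFReal μ v z) z := by
  have hexponent : HasDerivAt (fun x => -(x - μ) ^ 2 / (2 * v)) (-((z - μ) / v)) z :=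
    ((((hasDerivAt_id' z).sub_const μ).pow 2).neg.div_const (2 * (v : ℝ))).congr_deriv
      (by field_simp; ring)
  rw [gaussianPDFReal_def]
  exact (hexponent.exp.const_mul (√(2 * π * v))⁻¹).congr_deriv (by ring)

theorem integral_sub_mul_eq_var_mul_integral_deriv (hv : v ≠ 0) {φ φ' : ℝ → ℝ}
    (hφ : ∀ z, HasDerivAt φ (φ' z) z) (hφ_int : Integrable φ (gaussianReal μ v))
    (hφ'_int : Integrable φ' (gaussianReal μ v))
    (hφμ_int : Integrable (fun z => (z - μ) * φ z) (gaussianReal μ v)) :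
    ∫ z, (z - μ) * φ z ∂gaussianReal μ v = v * ∫ z, φ' z ∂gaussianReal μ v := by
  rw [integrable_gaussianReal_iff hv] at hφ_int hφ'_int hφμ_int
  have hibp := integral_mul_deriv_eq_deriv_mul_of_integrable (u := φ) (u' := φ')
    (v := fun z => -(v * gaussianPDFReal μ v z)) (v' := fun z => (z - μ) * gaussianPDFReal μ v z)
    (fun z _ => hφ z)
    (fun z _ => ((hasDerivAt_gaussianPDFReal hv z).const_mul (v : ℝ)).neg.congr_deriv
      (by field_simp))
    (by convert hφμ_int using 2; simp only [Pi.mul_apply]; ring)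
    (by convert hφ'_int.const_mul (-(v : ℝ)) using 2; simp only [Pi.mul_apply]; ring)
    (by convert hφ_int.const_mul (-(v : ℝ)) using 2; simp only [Pi.mul_apply]; ring)
  rw [integral_gaussianReal_eq_integral_smul hv, integral_gaussianReal_eq_integral_smul hv,
    ← integral_const_mul]
  convert hibp using 1
  · congr 1; ext z; simp only [smul_eq_mul]; ring
  · rw [← integral_neg]; congr 1; ext z; simp only [smul_eq_mul]; ring

end GaussianStein

section LinearGrowth

variable {μ : ℝ} {v : ℝ≥0} {φ : ℝ → ℝ} {A : ℝ}

lemma abs_le_one_add_sq (z : ℝ) : |z| ≤ 1 + z ^ 2 := by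
  nlinarith [sq_abs z, sq_nonneg (|z| - 1)]

lemma abs_comp_affine_le (hφ : ∀ u, |φ u| ≤ A * (1 + |u|)) {a b α β : ℝ} (ha : |a| ≤ α)
    (hb : |b| ≤ β) (z : ℝ) : |φ (a + b * z)| ≤ A * (1 + α + β) * (1 + z ^ 2) := by
  have hA : 0 ≤ A := by simpa using (abs_nonneg _).trans (hφ 0)
  have hz := abs_le_one_add_sq z
  have hu : |a + b * z| ≤ α + β * (1 + z ^ 2) := by
    calc |a + b * z| ≤ |a| + |b| * |z| := by rw [← abs_mul]; exact abs_add_le _ _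
      _ ≤ α + β * (1 + z ^ 2) := by gcongr; exact (abs_nonneg _).trans hb
  calc |φ (a + b * z)| ≤ A * (1 + |a + b * z|) := hφ _
    _ ≤ A * (1 + (α + β * (1 + z ^ 2))) := by gcongr
    _ ≤ A * (1 + α + β) * (1 + z ^ 2) := by
      have hα := (abs_nonneg a).trans ha
      rw [mul_assoc]; gcongr; nlinarith [sq_nonneg z, mul_nonneg hα (sq_nonneg z)]

lemma abs_mul_comp_affine_le (hφ : ∀ u, |φ u| ≤ A * (1 + |u|)) {a b α β : ℝ} (ha : |a| ≤ α)
    (hb : |b| ≤ β) (z : ℝ) : |z * φ (a + b * z)| ≤ A * (1 + α + β) * (1 + z ^ 2) := by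
  have hA : 0 ≤ A := by simpa using (abs_nonneg _).trans (hφ 0)
  have hz := abs_le_one_add_sq z
  have hu : |a + b * z| ≤ α + β * |z| := by
    calc |a + b * z| ≤ |a| + |b| * |z| := by rw [← abs_mul]; exact abs_add_le _ _
      _ ≤ α + β * |z| := by gcongr
  have hα := (abs_nonneg a).trans ha
  have hβ := (abs_nonneg b).trans hb
  rw [abs_mul]
  calc |z| * |φ (a + b * z)| ≤ |z| * (A * (1 + (α + β * |z|))) := by
        gcongr; exact (hφ _).trans (by gcongr)
    _ = A * ((1 + α) * |z| + β * z ^ 2) := by rw [← sq_abs z]; ring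
    _ ≤ A * (1 + α + β) * (1 + z ^ 2) := by
        rw [mul_assoc]; gcongr; nlinarith [sq_nonneg z]

lemma integrable_comp_affine (hφc : Continuous φ) (hφ : ∀ u, |φ u| ≤ A * (1 + |u|)) (a b : ℝ) :
    Integrable (fun z => φ (a + b * z)) (gaussianReal μ v) :=
  integrable_gaussianReal_of_abs_le (by fun_prop) (abs_comp_affine_le hφ le_rfl le_rfl)

lemma integrable_mul_comp_affine (hφc : Continuous φ) (hφ : ∀ u, |φ u| ≤ A * (1 + |u|))
    (a b : ℝ) : Integrable (fun z => z * φ (a + b * z)) (gaussianReal μ v) :=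
  integrable_gaussianReal_of_abs_le (by fun_prop) (abs_mul_comp_affine_le hφ le_rfl le_rfl)

end LinearGrowth

section SmartPath

variable {v : ℝ≥0} {φ : ℝ → ℝ} {A : ℝ}

noncomputable def smartPath (v : ℝ≥0) (φ : ℝ → ℝ) (x t : ℝ) : ℝ :=
  ∫ z, φ (√t * x + √(1 - t) * z) ∂gaussianReal 0 v

noncomputable def smartPathCov (v : ℝ≥0) (φ : ℝ → ℝ) (x t : ℝ) : ℝ :=
  ∫ z, z * φ (√t * x + √(1 - t) * z) ∂gaussianReal 0 v

lemma smartPath_zero (φ : ℝ → ℝ) (x : ℝ) :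
    smartPath v φ x 0 = ∫ z, φ z ∂gaussianReal 0 v := by
  simp [smartPath]

lemma smartPath_one (φ : ℝ → ℝ) (x : ℝ) : smartPath v φ x 1 = φ x := by
  simp [smartPath]

lemma abs_sqrt_mul_le {t : ℝ} (ht : t ∈ Icc (0 : ℝ) 1) (x : ℝ) : |√t * x| ≤ |x| := by
  rw [abs_mul, abs_of_nonneg (sqrt_nonneg t)]
  exact mul_le_of_le_one_left (abs_nonneg x) (sqrt_le_one.2 ht.2)

lemma abs_sqrt_one_sub_le {t : ℝ} (ht : t ∈ Icc (0 : ℝ) 1) : |√(1 - t)| ≤ 1 := by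
  rw [abs_of_nonneg (sqrt_nonneg _)]
  exact sqrt_le_one.2 (by linarith [ht.1])

lemma continuousOn_smartPath (hφc : Continuous φ) (hφ : ∀ u, |φ u| ≤ A * (1 + |u|)) (x : ℝ) :
    ContinuousOn (smartPath v φ x) (Icc 0 1) :=
  continuousOn_of_dominated (bound := fun z => A * (1 + |x| + 1) * (1 + z ^ 2))
    (fun _ _ => (integrable_comp_affine hφc hφ _ _).aestronglyMeasurable)
    (fun _ ht => ae_of_all _ fun z =>
      abs_comp_affine_le hφ (abs_sqrt_mul_le ht x) (abs_sqrt_one_sub_le ht) z)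
    (integrable_one_add_sq_gaussianReal.const_mul _)
    (ae_of_all _ fun _ => by fun_prop)

lemma continuousOn_smartPathCov (hφc : Continuous φ) (hφ : ∀ u, |φ u| ≤ A * (1 + |u|))
    (x : ℝ) : ContinuousOn (smartPathCov v φ x) (Icc 0 1) :=
  continuousOn_of_dominated (bound := fun z => A * (1 + |x| + 1) * (1 + z ^ 2))
    (fun _ _ => (integrable_mul_comp_affine hφc hφ _ _).aestronglyMeasurable)
    (fun _ ht => ae_of_all _ fun z =>
      abs_mul_comp_affine_le hφ (abs_sqrt_mul_le ht x) (abs_sqrt_one_sub_le ht) z)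
    (integrable_one_add_sq_gaussianReal.const_mul _)
    (ae_of_all _ fun _ => by fun_prop)

end SmartPath

section BoundedDerivative

variable {v : ℝ≥0} {φ g g' : ℝ → ℝ} {C : ℝ}

lemma abs_le_of_abs_deriv_le (hg : ∀ u, HasDerivAt g (g' u) u) (hC : ∀ u, |g' u| ≤ C) (u : ℝ) :
    |g u| ≤ (|g 0| + C) * (1 + |u|) := by
  have hC0 : 0 ≤ C := (abs_nonneg _).trans (hC 0)
  have hlip : |g u - g 0| ≤ C * |u - 0| := by
    simpa only [Real.norm_eq_abs] using Convex.norm_image_sub_le_of_norm_hasDerivWithin_le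
      (fun u _ => (hg u).hasDerivWithinAt) (fun u _ => hC u) convex_univ (mem_univ 0) (mem_univ u)
  rw [sub_zero] at hlip
  nlinarith [abs_sub_abs_le_abs_sub (g u) (g 0), abs_nonneg u, abs_nonneg (g 0)]

lemma abs_le_mul_one_add_abs_of_abs_le (hφ : ∀ u, |φ u| ≤ C) (u : ℝ) :
    |φ u| ≤ C * (1 + |u|) :=
  (hφ u).trans (le_mul_of_one_le_right ((abs_nonneg _).trans (hφ 0))
    (le_add_of_nonneg_right (abs_nonneg u)))

lemma abs_mul_le_of_abs_le (hφ : ∀ u, |φ u| ≤ C) (z u : ℝ) : |z * φ u| ≤ C * (1 + z ^ 2) := by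
  rw [abs_mul, mul_comm]
  exact mul_le_mul (hφ _) (abs_le_one_add_sq z) (abs_nonneg z) ((abs_nonneg _).trans (hφ 0))

lemma abs_smartPathCov_le (hφ : ∀ u, |φ u| ≤ C) (x t : ℝ) :
    |smartPathCov v φ x t| ≤ C * ∫ z : ℝ, 1 + z ^ 2 ∂gaussianReal 0 v := by
  rw [← integral_const_mul, ← Real.norm_eq_abs]
  exact norm_integral_le_of_norm_le (integrable_one_add_sq_gaussianReal.const_mul C)
    (ae_of_all _ fun z => abs_mul_le_of_abs_le hφ z _)

lemma smartPathCov_eq (hv : v ≠ 0) (hg : ∀ u, HasDerivAt g (g' u) u) (hg'c : Continuous g')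
    (hC : ∀ u, |g' u| ≤ C) (x t : ℝ) :
    smartPathCov v g x t = v * (√(1 - t) * smartPath v g' x t) := by
  have hgc : Continuous g := continuous_iff_continuousAt.2 fun u => (hg u).continuousAt
  have hg_growth := abs_le_of_abs_deriv_le hg hC
  have hg'_growth := abs_le_mul_one_add_abs_of_abs_le hC
  have := integral_sub_mul_eq_var_mul_integral_deriv (μ := 0) hv
    (φ := fun z => g (√t * x + √(1 - t) * z))
    (fun z => ((hg _).comp z (((hasDerivAt_id' z).const_mul _).const_add _)))
    (integrable_comp_affine hgc hg_growth _ _)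
    ((integrable_comp_affine hg'c hg'_growth _ _).mul_const _)
    (by simpa using integrable_mul_comp_affine hgc hg_growth _ _)
  simp only [sub_zero, mul_one] at this
  rw [smartPathCov, this, smartPath, integral_mul_const, mul_comm (∫ _, _ ∂_)]

lemma hasDerivAt_smartPathCov (hg : ∀ u, HasDerivAt g (g' u) u) (hg'c : Continuous g')
    (hC : ∀ u, |g' u| ≤ C) (x t : ℝ) :
    HasDerivAt (fun ξ => smartPathCov v g ξ t) (√t * smartPathCov v g' x t) x := by
  have hgc : Continuous g := continuous_iff_continuousAt.2 fun u => (hg u).continuousAt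
  have hg_int := integrable_mul_comp_affine (μ := 0) (v := v) hgc (abs_le_of_abs_deriv_le hg hC)
  have key := hasDerivAt_integral_of_dominated_loc_of_deriv_le (x₀ := x)
    (F := fun ξ z => z * g (√t * ξ + √(1 - t) * z))
    (F' := fun ξ z => √t * (z * g' (√t * ξ + √(1 - t) * z)))
    (bound := fun z => √t * (C * (1 + z ^ 2))) univ_mem
    (Eventually.of_forall fun ξ => (hg_int _ _).aestronglyMeasurable) (hg_int _ _)
    (by fun_prop : Continuous _).aestronglyMeasurable
    (ae_of_all _ fun z ξ _ => by
      rw [Real.norm_eq_abs, abs_mul, abs_of_nonneg (sqrt_nonneg t)]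
      exact mul_le_mul_of_nonneg_left (abs_mul_le_of_abs_le hC z _) (sqrt_nonneg t))
    ((integrable_one_add_sq_gaussianReal.const_mul C).const_mul _)
    (ae_of_all _ fun z ξ _ =>
      (((hg _).comp ξ (((hasDerivAt_id' ξ).const_mul √t).add_const _)).const_mul z).congr_deriv
        (by ring))
  rw [smartPathCov, ← integral_const_mul]
  exact key.2

lemma hasDerivAt_sqrt_mul_add_sqrt_one_sub_mul {s : ℝ} (hs : s ∈ Ioo (0 : ℝ) 1) (x z : ℝ) :
    HasDerivAt (fun s => √s * x + √(1 - s) * z)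
      ((2 * √s)⁻¹ * x - (2 * √(1 - s))⁻¹ * z) s := by
  have h1 := (hasDerivAt_sqrt hs.1.ne').mul_const x
  have h2 := ((hasDerivAt_sqrt (sub_pos.2 hs.2).ne').comp s
    ((hasDerivAt_id' s).const_sub 1)).mul_const z
  exact (h1.add h2).congr_deriv (by simp only [one_div]; ring)

lemma abs_mul_sub_mul_mul_le {a b c x z w C : ℝ} (ha : 0 ≤ a) (hb : 0 ≤ b) (hac : a ≤ c)
    (hbc : b ≤ c) (hw : |w| ≤ C) : |(a * x - b * z) * w| ≤ c * C * (1 + |x|) * (1 + z ^ 2) := by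
  have hc : 0 ≤ c := ha.trans hac
  have hC : 0 ≤ C := (abs_nonneg _).trans hw
  have hxz : |x| + |z| ≤ (1 + |x|) * (1 + z ^ 2) := by
    nlinarith [abs_le_one_add_sq z, mul_nonneg (abs_nonneg x) (sq_nonneg z)]
  rw [abs_mul]
  calc |a * x - b * z| * |w| ≤ (a * |x| + b * |z|) * C := by
        refine mul_le_mul ((abs_sub _ _).trans_eq ?_) hw (abs_nonneg _) (by positivity)
        rw [abs_mul, abs_mul, abs_of_nonneg ha, abs_of_nonneg hb]
    _ ≤ (c * |x| + c * |z|) * C := by gcongr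
    _ = c * C * (|x| + |z|) := by ring
    _ ≤ c * C * ((1 + |x|) * (1 + z ^ 2)) := by gcongr
    _ = c * C * (1 + |x|) * (1 + z ^ 2) := by ring

lemma hasDerivAt_smartPath (hg : ∀ u, HasDerivAt g (g' u) u) (hg'c : Continuous g')
    (hC : ∀ u, |g' u| ≤ C) (x : ℝ) {t : ℝ} (ht : t ∈ Ioo (0 : ℝ) 1) :
    HasDerivAt (smartPath v g x)
      ((2 * √t)⁻¹ * x * smartPath v g' x t - (2 * √(1 - t))⁻¹ * smartPathCov v g' x t) t := by
  have hgc : Continuous g := continuous_iff_continuousAt.2 fun u => (hg u).continuousAt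
  have hg_int := integrable_comp_affine (μ := 0) (v := v) hgc (abs_le_of_abs_deriv_le hg hC)
  set m := min t (1 - t) / 2 with hm_def
  have hm : 0 < m := by have := ht.1; have := ht.2; positivity
  have hm_le : ∀ s ∈ Ioo m (1 - m), (2 * √s)⁻¹ ≤ (2 * √m)⁻¹ ∧ (2 * √(1 - s))⁻¹ ≤ (2 * √m)⁻¹ :=
    fun s hs => ⟨by gcongr; exact hs.1.le, by gcongr; linarith [hs.2]⟩
  have hU : Ioo m (1 - m) ⊆ Ioo 0 1 := Ioo_subset_Ioo hm.le (by linarith)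
  have key := hasDerivAt_integral_of_dominated_loc_of_deriv_le (x₀ := t)
    (F := fun s z => g (√s * x + √(1 - s) * z))
    (F' := fun s z => ((2 * √s)⁻¹ * x - (2 * √(1 - s))⁻¹ * z) * g' (√s * x + √(1 - s) * z))
    (bound := fun z => (2 * √m)⁻¹ * C * (1 + |x|) * (1 + z ^ 2))
    (Ioo_mem_nhds (by simp only [hm_def]; have := min_le_left t (1 - t); linarith [ht.1])
      (by simp only [hm_def]; have := min_le_right t (1 - t); linarith [ht.2]))
    (Eventually.of_forall fun s => (hg_int _ _).aestronglyMeasurable) (hg_int _ _)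
    (by fun_prop : Continuous _).aestronglyMeasurable
    (ae_of_all _ fun z s hs => abs_mul_sub_mul_mul_le (by positivity) (by positivity)
      (hm_le s hs).1 (hm_le s hs).2 (hC _))
    (integrable_one_add_sq_gaussianReal.const_mul _)
    (ae_of_all _ fun z s hs =>
      (hg _).comp s (hasDerivAt_sqrt_mul_add_sqrt_one_sub_mul (hU hs) x z) |>.congr_deriv
        (mul_comm _ _))
  have hint := integrable_comp_affine (μ := 0) (v := v) hg'c (abs_le_mul_one_add_abs_of_abs_le hC)
  have hint' := integrable_mul_comp_affine (μ := 0) (v := v) hg'c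
    (abs_le_mul_one_add_abs_of_abs_le hC)
  refine key.2.congr_deriv ?_
  simp_rw [sub_mul, mul_assoc]
  rw [integral_sub (((hint _ _).const_mul x).const_mul _) ((hint' _ _).const_mul _),
    integral_const_mul, integral_const_mul, integral_const_mul, smartPath, smartPathCov]

end BoundedDerivative

section SteinSolution

variable {v : ℝ≥0} {g g' ψ : ℝ → ℝ} {C : ℝ}

noncomputable def steinWeight (t : ℝ) : ℝ := (2 * √(t * (1 - t)))⁻¹

lemma steinWeight_mul_sqrt_one_sub {t : ℝ} (ht : t ∈ Ioo (0 : ℝ) 1) :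
    steinWeight t * √(1 - t) = (2 * √t)⁻¹ := by
  have : 0 < √(1 - t) := sqrt_pos.2 (sub_pos.2 ht.2)
  rw [steinWeight, sqrt_mul ht.1.le]
  field_simp

lemma steinWeight_mul_sqrt {t : ℝ} (ht : t ∈ Ioo (0 : ℝ) 1) :
    steinWeight t * √t = (2 * √(1 - t))⁻¹ := by
  have : 0 < √t := sqrt_pos.2 ht.1
  rw [steinWeight, sqrt_mul ht.1.le]
  field_simp

/-- `steinWeight` is the derivative of `t ↦ arcsin (2t - 1) / 2`. -/
lemma intervalIntegrable_steinWeight : IntervalIntegrable steinWeight volume 0 1 := by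
  refine intervalIntegral.intervalIntegrable_deriv_of_nonneg (g := fun t => arcsin (2 * t - 1) / 2)
    (by fun_prop) (fun t ht => ?_) (fun t _ => by unfold steinWeight; positivity)
  rw [min_eq_left zero_le_one, max_eq_right zero_le_one] at ht
  have h4 : √(1 - (2 * t - 1) ^ 2) = 2 * √(t * (1 - t)) := by
    rw [show 1 - (2 * t - 1) ^ 2 = 2 ^ 2 * (t * (1 - t)) by ring,
      sqrt_mul (by positivity), sqrt_sq zero_le_two]
  refine (((hasDerivAt_arcsin (by linarith [ht.1]) (by linarith [ht.2])).comp t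
    (((hasDerivAt_id' t).const_mul 2).sub_const 1)).div_const 2).congr_deriv ?_
  rw [h4, steinWeight]
  ring

lemma intervalIntegrable_steinWeight_mul (hψ : ContinuousOn ψ (Icc 0 1)) :
    IntervalIntegrable (fun t => steinWeight t * ψ t) volume 0 1 :=
  intervalIntegrable_steinWeight.mul_continuousOn (by rwa [uIcc_of_le zero_le_one])

lemma intervalIntegrable_steinWeight_mul_smartPathCov {φ : ℝ → ℝ} {A : ℝ} (hφc : Continuous φ)
    (hφ : ∀ u, |φ u| ≤ A * (1 + |u|)) (x : ℝ) :
    IntervalIntegrable (fun t => steinWeight t * smartPathCov v φ x t) volume 0 1 :=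
  intervalIntegrable_steinWeight_mul (continuousOn_smartPathCov hφc hφ x)

lemma intervalIntegrable_steinWeight_mul_sqrt_mul_smartPathCov {φ : ℝ → ℝ} {A : ℝ}
    (hφc : Continuous φ) (hφ : ∀ u, |φ u| ≤ A * (1 + |u|)) (x : ℝ) :
    IntervalIntegrable (fun t => steinWeight t * (√t * smartPathCov v φ x t)) volume 0 1 :=
  intervalIntegrable_steinWeight_mul (ψ := fun t => √t * smartPathCov v φ x t)
    (continuous_sqrt.continuousOn.mul (continuousOn_smartPathCov hφc hφ x))

noncomputable def gaussianSteinSol (v : ℝ≥0) (g : ℝ → ℝ) (x : ℝ) : ℝ :=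
  -(1 / v) * ∫ t in (0 : ℝ)..1, steinWeight t * smartPathCov v g x t

lemma hasDerivAt_integral_steinWeight_mul_smartPathCov (hg : ∀ u, HasDerivAt g (g' u) u)
    (hg'c : Continuous g') (hC : ∀ u, |g' u| ≤ C) (x : ℝ) :
    HasDerivAt (fun ξ => ∫ t in (0 : ℝ)..1, steinWeight t * smartPathCov v g ξ t)
      (∫ t in (0 : ℝ)..1, steinWeight t * (√t * smartPathCov v g' x t)) x := by
  have hgc : Continuous g := continuous_iff_continuousAt.2 fun u => (hg u).continuousAt
  have hK := intervalIntegrable_steinWeight_mul_smartPathCov (v := v) hgc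
    (abs_le_of_abs_deriv_le hg hC)
  have hK' := intervalIntegrable_steinWeight_mul_sqrt_mul_smartPathCov (v := v) hg'c
    (abs_le_mul_one_add_abs_of_abs_le hC) x
  refine (intervalIntegral.hasDerivAt_integral_of_dominated_loc_of_deriv_le univ_mem
    (Eventually.of_forall fun ξ => (intervalIntegrable_iff.1 (hK ξ)).aestronglyMeasurable)
    (hK x) (intervalIntegrable_iff.1 hK').aestronglyMeasurable (ae_of_all _ fun t ht ξ _ => ?_)
    (intervalIntegrable_steinWeight.mul_const (C * ∫ z : ℝ, 1 + z ^ 2 ∂gaussianReal 0 v))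
    (ae_of_all _ fun t _ ξ _ =>
      (hasDerivAt_smartPathCov hg hg'c hC ξ t).const_mul (steinWeight t))).2
  rw [uIoc_of_le zero_le_one] at ht
  have hw : 0 ≤ steinWeight t := by unfold steinWeight; positivity
  rw [Real.norm_eq_abs, abs_mul, abs_of_nonneg hw, abs_mul, abs_of_nonneg (sqrt_nonneg t)]
  exact mul_le_mul_of_nonneg_left ((mul_le_of_le_one_left (abs_nonneg _)
    (sqrt_le_one.2 ht.2)).trans (abs_smartPathCov_le hC ξ t)) hw

lemma integral_steinWeight_mul_sub_eq (hv : v ≠ 0) (hg : ∀ u, HasDerivAt g (g' u) u)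
    (hg'c : Continuous g') (hC : ∀ u, |g' u| ≤ C) (x : ℝ) :
    ∫ t in (0 : ℝ)..1, (x / v * (steinWeight t * smartPathCov v g x t)
      - steinWeight t * (√t * smartPathCov v g' x t)) = g x - ∫ z, g z ∂gaussianReal 0 v := by
  have hgc : Continuous g := continuous_iff_continuousAt.2 fun u => (hg u).continuousAt
  rw [← smartPath_one g x, ← smartPath_zero (v := v) g x]
  refine intervalIntegral.integral_eq_sub_of_hasDerivAt_of_le zero_le_one
    (continuousOn_smartPath hgc (abs_le_of_abs_deriv_le hg hC) x)
    (fun t ht => (hasDerivAt_smartPath hg hg'c hC x ht).congr_deriv ?_)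
    (((intervalIntegrable_steinWeight_mul_smartPathCov hgc
      (abs_le_of_abs_deriv_le hg hC) x).const_mul _).sub
      (intervalIntegrable_steinWeight_mul_sqrt_mul_smartPathCov hg'c
        (abs_le_mul_one_add_abs_of_abs_le hC) x))
  rw [smartPathCov_eq hv hg hg'c hC, ← steinWeight_mul_sqrt_one_sub ht, ← steinWeight_mul_sqrt ht]
  field_simp

theorem gaussianSteinSol_stein_eq (hv : v ≠ 0) (hg : ∀ u, HasDerivAt g (g' u) u)
    (hg'c : Continuous g') (hC : ∀ u, |g' u| ≤ C) (x : ℝ) :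
    v * deriv (gaussianSteinSol v g) x - x * gaussianSteinSol v g x
      = g x - ∫ z, g z ∂gaussianReal 0 v := by
  have hgc : Continuous g := continuous_iff_continuousAt.2 fun u => (hg u).continuousAt
  have hderiv : HasDerivAt (gaussianSteinSol v g)
      (-(1 / v) * ∫ t in (0 : ℝ)..1, steinWeight t * (√t * smartPathCov v g' x t)) x :=
    (hasDerivAt_integral_steinWeight_mul_smartPathCov hg hg'c hC x).const_mul _
  rw [hderiv.deriv, gaussianSteinSol, ← integral_steinWeight_mul_sub_eq hv hg hg'c hC x,
    intervalIntegral.integral_sub ((intervalIntegrable_steinWeight_mul_smartPathCov hgc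
      (abs_le_of_abs_deriv_le hg hC) x).const_mul _)
      (intervalIntegrable_steinWeight_mul_sqrt_mul_smartPathCov hg'c
        (abs_le_mul_one_add_abs_of_abs_le hC) x),
    intervalIntegral.integral_const_mul]
  field_simp
  ring

end SteinSolution

section PartialDerivative

variable {F : Type*} [NormedAddCommGroup F] [NormedSpace ℝ F] {h : ℝ × F → ℝ} {C : ℝ}

lemma hasDerivAt_apply_prodMk_left (hh : Differentiable ℝ h) (y : F) (u : ℝ) :
    HasDerivAt (fun u => h (u, y)) (fderiv ℝ h (u, y) (1, 0)) u :=
  (hh _).hasFDerivAt.comp_hasDerivAt u ((hasDerivAt_id' u).prodMk (hasDerivAt_const u y))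

lemma abs_fderiv_apply_one_zero_le (hC : ∀ p, ‖fderiv ℝ h p‖ ≤ C) (p : ℝ × F) :
    |fderiv ℝ h p (1, 0)| ≤ C := by
  rw [← Real.norm_eq_abs]
  refine ((fderiv ℝ h p).le_opNorm _).trans ?_
  simpa [Prod.norm_def] using hC p

end PartialDerivative

theorem stmt3_general {d : ℕ} (σ : ℝ) (hσ : 0 < σ)
    (h : ℝ × EuclideanSpace ℝ (Fin d) → ℝ)
    (hh : ContDiff ℝ 1 h)
    (hhB : ∃ C : ℝ, ∀ p, ‖fderiv ℝ h p‖ ≤ C) :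
    ∀ (x : ℝ) (y : EuclideanSpace ℝ (Fin d)),
      σ ^ 2 * deriv (fun t => steinSol σ h t y) x - x * steinSol σ h x y
        = h (x, y) - ∫ z, h (z, y) ∂(gaussianReal 0 ⟨σ ^ 2, sq_nonneg σ⟩) := by
  intro x y
  obtain ⟨C, hC⟩ := hhB
  -- `steinSol σ h · y` is `gaussianSteinSol σ² (h(·, y))` by definition.
  exact gaussianSteinSol_stein_eq (v := ⟨σ ^ 2, sq_nonneg σ⟩)
    (NNReal.coe_ne_zero.1 (pow_pos hσ 2).ne')
    (hasDerivAt_apply_prodMk_left (hh.differentiable one_ne_zero) y)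
    ((hh.continuous_fderiv one_ne_zero).clm_apply continuous_const |>.comp (by fun_prop))
    (fun u => abs_fderiv_apply_one_zero_le hC (u, y)) x

/-- The Stein solution `f_h` satisfies the Stein equation
`σ² ∂_x f_h(x,y) − x f_h(x,y) = h(x,y) − E[h(Z,y)]`. -/
theorem stmt3 {d : ℕ} (hd : 1 ≤ d) (σ : ℝ) (hσ : 0 < σ)
    (h : ℝ × EuclideanSpace ℝ (Fin d) → ℝ)
    (hh : ContDiff ℝ 1 h)
    (hhB : ∃ C : ℝ, ∀ p, ‖fderiv ℝ h p‖ ≤ C) :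
    ∀ (x : ℝ) (y : EuclideanSpace ℝ (Fin d)),
      σ ^ 2 * deriv (fun t => steinSol σ h t y) x - x * steinSol σ h x y
        = h (x, y) - ∫ z, h (z, y) ∂(gaussianReal 0 ⟨σ ^ 2, sq_nonneg σ⟩) :=
  stmt3_general σ hσ h hh hhB
end

section
/- Let h : ℝ × ℝ^d → ℝ be continuously differentiable with bounded partial derivatives. Then the Stein solution f_h is bounded and satisfies ‖f_h‖_∞ ≤ ‖∂_x h‖_∞. -/
/-! Since `E[Z] = 0`, `E[Z h(a + bZ, y)] = E[Z (h(a + bZ, y) - h(a, y))]`, and the bound on `∂ₓh`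
makes `h(·, y)` Lipschitz, so this is at most `‖∂ₓh‖_∞ · |b| · E[Z²] = ‖∂ₓh‖_∞ σ² √(1 - t)` for
`b = √(1 - t)`. The factor `√(1 - t)` cancels the singularity of the weight `(2√(t(1 - t)))⁻¹`
at `t = 1`, and `∫₀¹ (2√t)⁻¹ dt = 1`, so the `t`-integral is at most `‖∂ₓh‖_∞ σ²`, which the
prefactor `1/σ²` normalises. -/

open MeasureTheory ProbabilityTheory

open Real Set
open scoped NNReal

lemma integral_sq_gaussianReal (v : ℝ≥0) : ∫ z, z ^ 2 ∂gaussianReal 0 v = v := by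
  rw [← variance_id_gaussianReal (μ := 0) (v := v),
    variance_of_integral_eq_zero measurable_id.aemeasurable integral_id_gaussianReal]
  rfl

lemma abs_integral_mul_comp_affine_le {μ : Measure ℝ} [IsFiniteMeasure μ]
    (hmean : ∫ z, z ∂μ = 0) (hsq : MemLp id 2 μ) {φ : ℝ → ℝ} {L : ℝ≥0}
    (hφ : LipschitzWith L φ) (a b : ℝ) :
    |∫ z, z * φ (a + b * z) ∂μ| ≤ L * |b| * ∫ z, z ^ 2 ∂μ := by
  have hpt : ∀ z, ‖z * (φ (a + b * z) - φ a)‖ ≤ L * |b| * z ^ 2 := by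
    intro z
    have hdist := hφ.dist_le_mul (a + b * z) a
    rw [Real.dist_eq, Real.dist_eq, add_sub_cancel_left, abs_mul] at hdist
    rw [Real.norm_eq_abs, abs_mul, ← sq_abs z]
    calc |z| * |φ (a + b * z) - φ a| ≤ |z| * (L * (|b| * |z|)) := by gcongr
      _ = L * |b| * |z| ^ 2 := by ring
  have hsq' : Integrable (fun z => z ^ 2) μ := hsq.integrable_sq
  have hdiff : Integrable (fun z => z * (φ (a + b * z) - φ a)) μ :=
    have hφc := hφ.continuous
    (hsq'.const_mul _).mono' (by fun_prop) (ae_of_all _ hpt)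
  have hid : Integrable (fun z => z) μ := hsq.integrable one_le_two
  have hcentered : ∫ z, z * φ (a + b * z) ∂μ = ∫ z, z * (φ (a + b * z) - φ a) ∂μ := by
    have hsplit : (fun z => z * φ (a + b * z)) = fun z => z * (φ (a + b * z) - φ a) + z * φ a := by
      ext z; ring
    rw [hsplit, integral_add hdiff (hid.mul_const _), integral_mul_const, hmean, zero_mul, add_zero]
  rw [hcentered, ← Real.norm_eq_abs, ← integral_const_mul]
  exact norm_integral_le_of_norm_le (hsq'.const_mul _) (ae_of_all _ hpt)

lemma abs_integral_mul_comp_affine_gaussianReal_le (v : ℝ≥0) {φ : ℝ → ℝ} {L : ℝ≥0}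
    (hφ : LipschitzWith L φ) (a b : ℝ) :
    |∫ z, z * φ (a + b * z) ∂gaussianReal 0 v| ≤ L * |b| * v := by
  simpa only [integral_sq_gaussianReal] using abs_integral_mul_comp_affine_le
    integral_id_gaussianReal (memLp_id_gaussianReal 2) hφ a b

lemma hasDerivAt_sqrt' {t : ℝ} (ht : t ≠ 0) : HasDerivAt (√·) (2 * √t)⁻¹ t := by
  simpa using hasDerivAt_sqrt ht

lemma intervalIntegrable_inv_two_mul_sqrt {a b : ℝ} (ha : 0 ≤ a) (hab : a ≤ b) :
    IntervalIntegrable (fun t => (2 * √t)⁻¹) volume a b :=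
  (intervalIntegrable_iff_integrableOn_Ioc_of_le hab).2 <|
    intervalIntegral.integrableOn_deriv_of_nonneg continuous_sqrt.continuousOn
      (fun _ ht => hasDerivAt_sqrt' (ha.trans_lt ht.1).ne') (fun _ _ => by positivity)

lemma integral_inv_two_mul_sqrt {a b : ℝ} (ha : 0 ≤ a) (hab : a ≤ b) :
    ∫ t in a..b, (2 * √t)⁻¹ = √b - √a :=
  intervalIntegral.integral_eq_sub_of_hasDerivAt_of_le hab continuous_sqrt.continuousOn
    (fun _ ht => hasDerivAt_sqrt' (ha.trans_lt ht.1).ne')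
    (intervalIntegrable_inv_two_mul_sqrt ha hab)

lemma inv_two_mul_sqrt_mul_one_sub_mul_sqrt_le (t : ℝ) :
    (2 * √(t * (1 - t)))⁻¹ * √(1 - t) ≤ (2 * √t)⁻¹ := by
  rcases le_or_gt (1 - t) 0 with ht | ht
  · rw [Real.sqrt_eq_zero'.2 ht, mul_zero]
    positivity
  · have hs : √(1 - t) ≠ 0 := (Real.sqrt_pos.2 ht).ne'
    rw [Real.sqrt_mul' t ht.le]
    refine le_of_eq ?_
    calc (2 * (√t * √(1 - t)))⁻¹ * √(1 - t) = (2 * √t)⁻¹ * ((√(1 - t))⁻¹ * √(1 - t)) := by ring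
      _ = (2 * √t)⁻¹ := by rw [inv_mul_cancel₀ hs, mul_one]

lemma abs_integral_inv_two_sqrt_mul_one_sub_mul_le {F : ℝ → ℝ} {M : ℝ} (hM : 0 ≤ M)
    (hF : ∀ t ∈ Ioc (0 : ℝ) 1, |F t| ≤ M * √(1 - t)) :
    |∫ t in (0 : ℝ)..1, (2 * √(t * (1 - t)))⁻¹ * F t| ≤ M := by
  have hbound : ∀ t ∈ Ioc (0 : ℝ) 1, ‖(2 * √(t * (1 - t)))⁻¹ * F t‖ ≤ M * (2 * √t)⁻¹ := by
    intro t ht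
    rw [Real.norm_eq_abs, abs_mul, abs_of_nonneg (by positivity)]
    calc (2 * √(t * (1 - t)))⁻¹ * |F t| ≤ (2 * √(t * (1 - t)))⁻¹ * (M * √(1 - t)) := by
          gcongr; exact hF t ht
      _ = M * ((2 * √(t * (1 - t)))⁻¹ * √(1 - t)) := by ring
      _ ≤ M * (2 * √t)⁻¹ := by gcongr; exact inv_two_mul_sqrt_mul_one_sub_mul_sqrt_le t
  rw [← Real.norm_eq_abs]
  calc ‖∫ t in (0 : ℝ)..1, (2 * √(t * (1 - t)))⁻¹ * F t‖ ≤ ∫ t in (0 : ℝ)..1, M * (2 * √t)⁻¹ :=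
        intervalIntegral.norm_integral_le_of_norm_le zero_le_one (ae_of_all _ hbound)
          ((intervalIntegrable_inv_two_mul_sqrt le_rfl zero_le_one).const_mul M)
    _ = M := by
      rw [intervalIntegral.integral_const_mul, integral_inv_two_mul_sqrt le_rfl zero_le_one]
      simp

theorem stmt5_general {d : ℕ} (σ : ℝ)
    (h : ℝ × EuclideanSpace ℝ (Fin d) → ℝ)
    (hh : ContDiff ℝ 1 h) :
    ∀ C : ℝ, (∀ (x : ℝ) (y : EuclideanSpace ℝ (Fin d)),
        |deriv (fun t => h (t, y)) x| ≤ C) →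
      ∀ (x : ℝ) (y : EuclideanSpace ℝ (Fin d)), |steinSol σ h x y| ≤ C := by
  intro C hC x y
  have hC0 : 0 ≤ C := (abs_nonneg _).trans (hC 0 0)
  have hlip : LipschitzWith C.toNNReal (fun u => h (u, y)) :=
    lipschitzWith_of_nnnorm_deriv_le (by fun_prop) fun u => by
      simpa [← NNReal.coe_le_coe, Real.coe_toNNReal _ hC0] using hC u y
  have hinner : ∀ t ∈ Ioc (0 : ℝ) 1,
      |∫ z, z * h (√t * x + √(1 - t) * z, y) ∂gaussianReal 0 ⟨σ ^ 2, sq_nonneg σ⟩|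
        ≤ C * σ ^ 2 * √(1 - t) := fun t _ => by
    have := abs_integral_mul_comp_affine_gaussianReal_le ⟨σ ^ 2, sq_nonneg σ⟩ hlip
      (√t * x) (√(1 - t))
    rw [abs_of_nonneg (Real.sqrt_nonneg _), Real.coe_toNNReal _ hC0] at this
    exact this.trans_eq (mul_right_comm _ _ _)
  have hweighted := abs_integral_inv_two_sqrt_mul_one_sub_mul_le (by positivity) hinner
  rw [steinSol, abs_mul, abs_neg, abs_of_nonneg (by positivity)]
  calc 1 / σ ^ 2 * _ ≤ 1 / σ ^ 2 * (C * σ ^ 2) := by gcongr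
    _ ≤ C := by
      -- for `σ = 0` the prefactor is the junk value `1 / 0 = 0`
      rcases eq_or_ne σ 0 with rfl | hσ
      · simpa using hC0
      · exact (by field_simp : 1 / σ ^ 2 * (C * σ ^ 2) = C).le

/-- The Stein solution is bounded, with `‖f_h‖_∞ ≤ ‖∂_x h‖_∞`. -/
theorem stmt5 {d : ℕ} (hd : 1 ≤ d) (σ : ℝ) (hσ : 0 < σ)
    (h : ℝ × EuclideanSpace ℝ (Fin d) → ℝ)
    (hh : ContDiff ℝ 1 h)
    (hhB : ∃ C : ℝ, ∀ p, ‖fderiv ℝ h p‖ ≤ C) :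
    ∀ C : ℝ, (∀ (x : ℝ) (y : EuclideanSpace ℝ (Fin d)),
        |deriv (fun t => h (t, y)) x| ≤ C) →
      ∀ (x : ℝ) (y : EuclideanSpace ℝ (Fin d)), |steinSol σ h x y| ≤ C :=
  stmt5_general σ h hh
end

section
/- Let σ > 0 and let F : ℝ × ℝ^d → ℝ. Suppose g₁, g₂ : ℝ × ℝ^d → ℝ are bounded functions, differentiable in the first variable, that both satisfy the equation σ² · ∂_x g(x,y) − x · g(x,y) = F(x,y) for all x ∈ ℝ, y ∈ ℝ^d. Then g₁ = g₂. (Equivalently, any bounded solution u of the homogeneous equation σ² · ∂_x u(x,y) = x · u(x,y) vanishes identically.) -/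
/-!
The difference `u` of two solutions solves `σ² u' = x u` in the first variable, so
`u(x) e^{-x²/(2σ²)}` has zero derivative and `u(x) = u(0) e^{x²/(2σ²)}`. Since this Gaussian
factor is unbounded, a bounded `u` must vanish.
-/

open Filter Real

lemma eq_mul_exp_sq_of_hasDerivAt {c : ℝ} {u : ℝ → ℝ}
    (hu : ∀ x, HasDerivAt u (x * u x / c) x) (x : ℝ) :
    u x = u 0 * exp (x ^ 2 / (2 * c)) := by
  set e : ℝ → ℝ := fun x => exp (-(x ^ 2) / (2 * c))
  have he : ∀ x, HasDerivAt e (e x * (-(2 * x) / (2 * c))) x := fun x =>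
    (((hasDerivAt_pow 2 x).fun_neg.div_const (2 * c)).exp).congr_deriv (by simp [e])
  have hconst : ∀ x, HasDerivAt (fun x => u x * e x) 0 x := fun x =>
    ((hu x).mul (he x)).congr_deriv (by ring)
  have h := is_const_of_deriv_eq_zero (fun x => (hconst x).differentiableAt)
    (fun x => (hconst x).deriv) x 0
  have he0 : e 0 = 1 := by simp [e]
  rw [he0, mul_one] at h
  rw [← h, mul_assoc, ← exp_add, neg_div, neg_add_cancel, exp_zero, mul_one]

lemma tendsto_exp_sq_div_atTop {c : ℝ} (hc : 0 < c) :
    Tendsto (fun x : ℝ => exp (x ^ 2 / (2 * c))) atTop atTop :=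
  tendsto_exp_atTop.comp ((tendsto_pow_atTop two_ne_zero).atTop_div_const (by positivity))

lemma eq_zero_of_hasDerivAt_of_bounded {c : ℝ} (hc : 0 < c) {u : ℝ → ℝ}
    (hu : ∀ x, HasDerivAt u (x * u x / c) x) (hB : ∃ C, ∀ x, |u x| ≤ C) : u = 0 := by
  obtain ⟨C, hC⟩ := hB
  suffices h0 : u 0 = 0 by
    ext x
    rw [eq_mul_exp_sq_of_hasDerivAt hu x, h0, zero_mul, Pi.zero_apply]
  by_contra hne
  obtain ⟨x, hx⟩ := (((tendsto_exp_sq_div_atTop hc).const_mul_atTop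
    (abs_pos.mpr hne)).eventually_gt_atTop C).exists
  have := hC x
  rw [eq_mul_exp_sq_of_hasDerivAt hu x, abs_mul, abs_of_pos (exp_pos _)] at this
  linarith

theorem stmt8_general {d : ℕ} (σ : ℝ) (hσ : 0 < σ)
    (F g₁ g₂ : ℝ × EuclideanSpace ℝ (Fin d) → ℝ)
    (hg₁B : ∃ C : ℝ, ∀ p, |g₁ p| ≤ C)
    (hg₂B : ∃ C : ℝ, ∀ p, |g₂ p| ≤ C)
    (hg₁diff : ∀ y : EuclideanSpace ℝ (Fin d), Differentiable ℝ (fun x => g₁ (x, y)))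
    (hg₂diff : ∀ y : EuclideanSpace ℝ (Fin d), Differentiable ℝ (fun x => g₂ (x, y)))
    (hg₁ : ∀ (x : ℝ) (y : EuclideanSpace ℝ (Fin d)),
      σ ^ 2 * deriv (fun t => g₁ (t, y)) x - x * g₁ (x, y) = F (x, y))
    (hg₂ : ∀ (x : ℝ) (y : EuclideanSpace ℝ (Fin d)),
      σ ^ 2 * deriv (fun t => g₂ (t, y)) x - x * g₂ (x, y) = F (x, y)) :
    g₁ = g₂ := by
  obtain ⟨C₁, hC₁⟩ := hg₁B
  obtain ⟨C₂, hC₂⟩ := hg₂B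
  have hσ2 : σ ^ 2 ≠ 0 := by positivity
  have hdiff : ∀ y x, HasDerivAt (fun t => g₁ (t, y) - g₂ (t, y))
      (x * (g₁ (x, y) - g₂ (x, y)) / σ ^ 2) x := by
    intro y x
    refine ((hg₁diff y x).hasDerivAt.sub (hg₂diff y x).hasDerivAt).congr_deriv ?_
    rw [eq_div_iff hσ2]
    linarith [hg₁ x y, hg₂ x y]
  have hbdd : ∀ y, ∃ C, ∀ x, |g₁ (x, y) - g₂ (x, y)| ≤ C := fun y =>
    ⟨C₁ + C₂, fun x => (abs_sub _ _).trans (add_le_add (hC₁ _) (hC₂ _))⟩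
  funext ⟨x, y⟩
  exact sub_eq_zero.mp
    (congrFun (eq_zero_of_hasDerivAt_of_bounded (by positivity) (hdiff y) (hbdd y)) x)

/-- Uniqueness of bounded solutions of the Stein equation: if two bounded
functions `g₁, g₂ : ℝ × ℝ^d → ℝ`, differentiable in the first variable, both satisfy
`σ² ∂_x g(x,y) − x g(x,y) = F(x,y)`, then `g₁ = g₂`. -/
theorem stmt8 {d : ℕ} (hd : 1 ≤ d) (σ : ℝ) (hσ : 0 < σ)
    (F g₁ g₂ : ℝ × EuclideanSpace ℝ (Fin d) → ℝ)
    (hg₁B : ∃ C : ℝ, ∀ p, |g₁ p| ≤ C)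
    (hg₂B : ∃ C : ℝ, ∀ p, |g₂ p| ≤ C)
    (hg₁diff : ∀ y : EuclideanSpace ℝ (Fin d), Differentiable ℝ (fun x => g₁ (x, y)))
    (hg₂diff : ∀ y : EuclideanSpace ℝ (Fin d), Differentiable ℝ (fun x => g₂ (x, y)))
    (hg₁ : ∀ (x : ℝ) (y : EuclideanSpace ℝ (Fin d)),
      σ ^ 2 * deriv (fun t => g₁ (t, y)) x - x * g₁ (x, y) = F (x, y))
    (hg₂ : ∀ (x : ℝ) (y : EuclideanSpace ℝ (Fin d)),
      σ ^ 2 * deriv (fun t => g₂ (t, y)) x - x * g₂ (x, y) = F (x, y)) :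
    g₁ = g₂ :=
  stmt8_general σ hσ F g₁ g₂ hg₁B hg₂B hg₁diff hg₂diff hg₁ hg₂
end

section
/- Let (T,ν) be a σ-finite measure space, let p, q ≥ 1 be integers and 0 ≤ r ≤ min(p,q). Let f₁, f₃ ∈ L²(ν^{⊗p}) and f₂, f₄ ∈ L²(ν^{⊗q}) be symmetric, and assume all the iterated integrals below converge absolutely. Then ⟨f₁ ⊗_r f₂, f₃ ⊗_r f₄⟩_{L²(T^{p+q−2r})} = ⟨f₁ ⊗_{p−r} f₃, f₂ ⊗_{q−r} f₄⟩_{L²(T^{2r})}. -/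
open MeasureTheory

/-- The way the first `r` coordinates (integration variables `u`) and the remaining `p − r`
coordinates (the first block of the free variables `t`) are combined into an argument of a
function on `T^p`, when forming the contraction `f ⊗_r g` with `f` on `T^p`, `g` on `T^q`. -/
def glueLeft {T : Type*} (p q r : ℕ) (hrp : r ≤ p) (hrq : r ≤ q)
    (u : Fin r → T) (t : Fin (p + q - 2 * r) → T) : Fin p → T :=
  fun i => if h : (i : ℕ) < r then u ⟨i, h⟩
    else t ⟨(i : ℕ) - r, by have := i.isLt; omega⟩

/-- The way the first `r` coordinates (integration variables `u`) and the last `q − r`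
coordinates (the second block of the free variables `t`) are combined into an argument of a
function on `T^q`, when forming the contraction `f ⊗_r g` with `f` on `T^p`, `g` on `T^q`. -/
def glueRight {T : Type*} (p q r : ℕ) (hrp : r ≤ p) (hrq : r ≤ q)
    (u : Fin r → T) (t : Fin (p + q - 2 * r) → T) : Fin q → T :=
  fun j => if h : (j : ℕ) < r then u ⟨j, h⟩
    else t ⟨(p - r) + ((j : ℕ) - r), by have := j.isLt; omega⟩

/-- The `r`-th contraction `f ⊗_r g` of `f : T^p → ℝ` and `g : T^q → ℝ`:
`(f ⊗_r g)(t₁,…,t_{p+q−2r}) = ∫_{T^r} f(u, t₁,…,t_{p−r}) g(u, t_{p−r+1},…,t_{p+q−2r}) dν^{⊗r}(u)`. -/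
noncomputable def contraction {T : Type*} [MeasurableSpace T] (ν : Measure T)
    (p q r : ℕ) (hrp : r ≤ p) (hrq : r ≤ q)
    (f : (Fin p → T) → ℝ) (g : (Fin q → T) → ℝ) :
    (Fin (p + q - 2 * r) → T) → ℝ :=
  fun t => ∫ u : Fin r → T,
    f (glueLeft p q r hrp hrq u t) * g (glueRight p q r hrp hrq u t)
      ∂(Measure.pi fun _ => ν)

/-- A function on `T^n` is symmetric if it is almost everywhere invariant under permutations
of its arguments. -/
def AESymmetric {T : Type*} [MeasurableSpace T] (ν : Measure T) {n : ℕ}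
    (f : (Fin n → T) → ℝ) : Prop :=
  ∀ σ : Equiv.Perm (Fin n),
    (fun x => f (x ∘ σ)) =ᵐ[Measure.pi fun _ : Fin n => ν] f

/-!
Write the free variable of the left-hand side as `t = (w, x) ∈ T^{p-r} × T^{q-r}` and that of
the right-hand side as `s = (a, b) ∈ T^r × T^r`. By Fubini, both sides are integrals over
`(w, x, a, b)`: the left one of `f₁(a, w) f₂(a, x) f₃(b, w) f₄(b, x)`, the right one of
`f₁(w, a) f₃(w, b) f₂(x, a) f₄(x, b)`. Moving a block of coordinates from the front to the back
is a permutation, so symmetry of the `fᵢ` makes the two integrands agree almost everywhere.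
-/

section PiFinSplit

variable (T : Type*) [MeasurableSpace T]

/- `N` is a separate argument, not `m + n`, so that `Fin p → T` splits along `p = r + (p - r)`
without casting. -/
noncomputable def piFinSplit (m n N : ℕ) (h : N = m + n) :
    (Fin N → T) ≃ᵐ (Fin m → T) × (Fin n → T) :=
  (MeasurableEquiv.piCongrLeft (fun _ => T) (finSumFinEquiv.trans (finCongr h.symm))).symm.trans
    (MeasurableEquiv.sumPiEquivProdPi fun _ => T)

variable {T}

theorem piFinSplit_apply (m n N : ℕ) (h : N = m + n) (s : Fin N → T) :
    piFinSplit T m n N h s =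
      (fun i : Fin m => s ⟨i, by omega⟩, fun j : Fin n => s ⟨m + j, by omega⟩) := by
  ext i <;> simp [piFinSplit, MeasurableEquiv.sumPiEquivProdPi, Equiv.sumPiEquivProdPi,
    MeasurableEquiv.piCongrLeft, Equiv.piCongrLeft, finCongr, Fin.cast]

theorem piFinSplit_symm_apply (m n N : ℕ) (h : N = m + n) (a : Fin m → T) (b : Fin n → T) :
    (piFinSplit T m n N h).symm (a, b) =
      fun i : Fin N => if hi : (i : ℕ) < m then a ⟨i, hi⟩ else b ⟨i - m, by omega⟩ := by
  rw [MeasurableEquiv.symm_apply_eq, piFinSplit_apply]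
  ext i
  · simp
  · simp only [add_lt_iff_neg_left, not_lt_zero, dite_false]
    congr 1
    ext
    simp

theorem measurePreserving_piFinSplit (ν : Measure T) [SigmaFinite ν] (m n N : ℕ)
    (h : N = m + n) :
    MeasurePreserving (piFinSplit T m n N h) (Measure.pi fun _ : Fin N => ν)
      ((Measure.pi fun _ : Fin m => ν).prod (Measure.pi fun _ : Fin n => ν)) :=
  (measurePreserving_sumPiEquivProdPi_symm _).symm _ |>.comp
    ((measurePreserving_piCongrLeft _ _).symm _)

theorem piFinSplit_symm_comp_finAddFlip (m n N : ℕ) (h : N = m + n) (h' : N = n + m)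
    (a : Fin m → T) (b : Fin n → T) :
    (piFinSplit T m n N h).symm (a, b) ∘ (finCongr h').trans (finAddFlip.trans (finCongr h.symm))
      = (piFinSplit T n m N h').symm (b, a) := by
  funext ⟨i, hi⟩
  simp only [Function.comp_apply, Equiv.trans_apply, finCongr_apply, Fin.cast_mk]
  by_cases hin : i < n
  · rw [finAddFlip_apply_mk_left hin]
    simp [piFinSplit_symm_apply, hin]
  · rw [finAddFlip_apply_mk_right (by omega) (by omega)]
    simp [piFinSplit_symm_apply, hin, show i - n < m by omega]

end PiFinSplit

section Glue

variable {T : Type*} [MeasurableSpace T]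

theorem glueLeft_piFinSplit_symm {p q r : ℕ} (hrp : r ≤ p) (hrq : r ≤ q)
    (a : Fin r → T) (w : Fin (p - r) → T) (x : Fin (q - r) → T) :
    glueLeft p q r hrp hrq a
        ((piFinSplit T (p - r) (q - r) (p + q - 2 * r) (by omega)).symm (w, x))
      = (piFinSplit T r (p - r) p (by omega)).symm (a, w) := by
  funext i
  simp only [glueLeft, piFinSplit_symm_apply]
  split_ifs
  · rfl
  · rfl
  · omega

theorem glueRight_piFinSplit_symm {p q r : ℕ} (hrp : r ≤ p) (hrq : r ≤ q)
    (a : Fin r → T) (w : Fin (p - r) → T) (x : Fin (q - r) → T) :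
    glueRight p q r hrp hrq a
        ((piFinSplit T (p - r) (q - r) (p + q - 2 * r) (by omega)).symm (w, x))
      = (piFinSplit T r (q - r) q (by omega)).symm (a, x) := by
  funext j
  simp only [glueRight, piFinSplit_symm_apply]
  split_ifs
  · rfl
  · omega
  · exact congrArg _ (Fin.ext (by dsimp only; omega))

theorem glueLeft_sub_piFinSplit_symm {n r : ℕ} (hrn : r ≤ n) (a b : Fin r → T)
    (w : Fin (n - r) → T) :
    glueLeft n n (n - r) (Nat.sub_le n r) (Nat.sub_le n r) w
        (fun i => (piFinSplit T r r (2 * r) (by omega)).symm (a, b) (Fin.cast (by omega) i))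
      = (piFinSplit T (n - r) r n (by omega)).symm (w, a) := by
  funext i
  simp only [glueLeft, piFinSplit_symm_apply, Fin.val_cast]
  split_ifs
  · rfl
  · rfl
  · omega

theorem glueRight_sub_piFinSplit_symm {n r : ℕ} (hrn : r ≤ n) (a b : Fin r → T)
    (w : Fin (n - r) → T) :
    glueRight n n (n - r) (Nat.sub_le n r) (Nat.sub_le n r) w
        (fun i => (piFinSplit T r r (2 * r) (by omega)).symm (a, b) (Fin.cast (by omega) i))
      = (piFinSplit T (n - r) r n (by omega)).symm (w, b) := by
  funext j
  simp only [glueRight, piFinSplit_symm_apply, Fin.val_cast]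
  split_ifs
  · rfl
  · omega
  · exact congrArg _ (Fin.ext (by dsimp only; omega))

end Glue

theorem MeasureTheory.Measure.QuasiMeasurePreserving.prodMap_swap {α β γ δ : Type*}
    [MeasurableSpace α] [MeasurableSpace β] [MeasurableSpace γ] [MeasurableSpace δ]
    {μα : Measure α} {μβ : Measure β} {μγ : Measure γ} {μδ : Measure δ}
    [SFinite μα] [SFinite μβ] [SFinite μγ] {f : α → γ} {g : β → δ}
    (hf : QuasiMeasurePreserving f μα μγ) (hg : QuasiMeasurePreserving g μβ μδ) :
    QuasiMeasurePreserving (fun z : α × β => (g z.2, f z.1)) (μα.prod μβ) (μδ.prod μγ) :=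
  (MeasureTheory.QuasiMeasurePreserving.prodMap hg hf).comp
    measurePreserving_swap.quasiMeasurePreserving

theorem AESymmetric.comp_piFinSplit_symm_swap {T : Type*} [MeasurableSpace T] {ν : Measure T}
    [SigmaFinite ν] {m n N : ℕ} {f : (Fin N → T) → ℝ} (hf : AESymmetric ν f)
    (h : N = m + n) (h' : N = n + m) :
    (fun y => f ((piFinSplit T n m N h').symm y.swap))
      =ᵐ[(Measure.pi fun _ : Fin m => ν).prod (Measure.pi fun _ : Fin n => ν)]
        fun y => f ((piFinSplit T m n N h).symm y) := by
  simp_rw [← piFinSplit_symm_comp_finAddFlip m n N h h']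
  exact ((measurePreserving_piFinSplit ν m n N h).symm _).quasiMeasurePreserving.ae_eq_comp
    (hf _)

theorem ae_eq_of_aeSymmetric_four_blocks {T : Type*} [MeasurableSpace T] {ν : Measure T}
    [SigmaFinite ν] {r m n P N : ℕ} (hP : P = r + m) (hP' : P = m + r) (hN : N = r + n)
    (hN' : N = n + r) {f₁ f₃ : (Fin P → T) → ℝ} {f₂ f₄ : (Fin N → T) → ℝ}
    (hs₁ : AESymmetric ν f₁) (hs₃ : AESymmetric ν f₃)
    (hs₂ : AESymmetric ν f₂) (hs₄ : AESymmetric ν f₄) :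
    (fun z : ((Fin m → T) × (Fin n → T)) × ((Fin r → T) × (Fin r → T)) =>
      f₁ ((piFinSplit T r m P hP).symm (z.2.1, z.1.1)) *
        f₂ ((piFinSplit T r n N hN).symm (z.2.1, z.1.2)) *
      (f₃ ((piFinSplit T r m P hP).symm (z.2.2, z.1.1)) *
        f₄ ((piFinSplit T r n N hN).symm (z.2.2, z.1.2))))
    =ᵐ[((Measure.pi fun _ : Fin m => ν).prod (Measure.pi fun _ : Fin n => ν)).prod
        ((Measure.pi fun _ : Fin r => ν).prod (Measure.pi fun _ : Fin r => ν))]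
    fun z =>
      f₁ ((piFinSplit T m r P hP').symm (z.1.1, z.2.1)) *
        f₃ ((piFinSplit T m r P hP').symm (z.1.1, z.2.2)) *
      (f₂ ((piFinSplit T n r N hN').symm (z.1.2, z.2.1)) *
        f₄ ((piFinSplit T n r N hN').symm (z.1.2, z.2.2))) := by
  open Measure in
  filter_upwards [
    (quasiMeasurePreserving_fst.prodMap_swap quasiMeasurePreserving_fst).ae_eq_comp
      (hs₁.comp_piFinSplit_symm_swap hP hP'),
    (quasiMeasurePreserving_snd.prodMap_swap quasiMeasurePreserving_fst).ae_eq_comp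
      (hs₂.comp_piFinSplit_symm_swap hN hN'),
    (quasiMeasurePreserving_fst.prodMap_swap quasiMeasurePreserving_snd).ae_eq_comp
      (hs₃.comp_piFinSplit_symm_swap hP hP'),
    (quasiMeasurePreserving_snd.prodMap_swap quasiMeasurePreserving_snd).ae_eq_comp
      (hs₄.comp_piFinSplit_symm_swap hN hN')] with z h₁ h₂ h₃ h₄
  simp only [Function.comp_apply, Prod.swap_prod_mk] at h₁ h₂ h₃ h₄
  rw [← h₁, ← h₂, ← h₃, ← h₄]
  ring

theorem integral_mul_integral_eq_integral_prod {α β γ 𝕜 : Type*} [MeasurableSpace α]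
    [MeasurableSpace β] [MeasurableSpace γ] [RCLike 𝕜] {μ : Measure α} {ν : Measure β}
    {ρ : Measure γ} [SFinite μ] [SFinite ν] [SFinite ρ] (F : α → β → 𝕜) (G : α → γ → 𝕜)
    (h : Integrable (fun w : α × β × γ => F w.1 w.2.1 * G w.1 w.2.2) (μ.prod (ν.prod ρ))) :
    ∫ x, (∫ y, F x y ∂ν) * (∫ z, G x z ∂ρ) ∂μ =
      ∫ w : α × β × γ, F w.1 w.2.1 * G w.1 w.2.2 ∂μ.prod (ν.prod ρ) := by
  simp_rw [← integral_prod_mul]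
  exact integral_integral h

theorem integrable_and_integral_eq_of_comp_ae_eq {Q X Y E : Type*} [MeasurableSpace Q]
    [MeasurableSpace X] [MeasurableSpace Y] [NormedAddCommGroup E] [NormedSpace ℝ E]
    {μ : Measure Q} {μX : Measure X} {μY : Measure Y} {eX : Q → X} {eY : Q → Y}
    (hX : MeasurePreserving eX μ μX) (hX' : MeasurableEmbedding eX)
    (hY : MeasurePreserving eY μ μY) (hY' : MeasurableEmbedding eY) {H : X → E} {K : Y → E}
    (hHK : (fun z => H (eX z)) =ᵐ[μ] fun z => K (eY z)) (hH : Integrable H μX) :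
    Integrable K μY ∧ ∫ x, H x ∂μX = ∫ y, K y ∂μY := by
  have hHe : Integrable (fun z => H (eX z)) μ := (hX.integrable_comp_emb hX').2 hH
  refine ⟨(hY.integrable_comp_emb hY').1 (hHe.congr hHK), ?_⟩
  rw [← hX.integral_comp hX' H, ← hY.integral_comp hY' K, integral_congr_ae hHK]

theorem integral_mul_integral_eq_of_comp_ae_eq {Q α β γ α' β' γ' 𝕜 : Type*}
    [MeasurableSpace Q] [MeasurableSpace α] [MeasurableSpace β] [MeasurableSpace γ]
    [MeasurableSpace α'] [MeasurableSpace β'] [MeasurableSpace γ'] [RCLike 𝕜]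
    {μQ : Measure Q} {μ : Measure α} {ν : Measure β} {ρ : Measure γ} {μ' : Measure α'}
    {ν' : Measure β'} {ρ' : Measure γ'} [SFinite μ] [SFinite ν] [SFinite ρ] [SFinite μ']
    [SFinite ν'] [SFinite ρ'] {F : α → β → 𝕜} {G : α → γ → 𝕜} {F' : α' → β' → 𝕜}
    {G' : α' → γ' → 𝕜} {e : Q → α × β × γ} {e' : Q → α' × β' × γ'}
    (he : MeasurePreserving e μQ (μ.prod (ν.prod ρ))) (he_emb : MeasurableEmbedding e)
    (he' : MeasurePreserving e' μQ (μ'.prod (ν'.prod ρ'))) (he'_emb : MeasurableEmbedding e')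
    (h : (fun z => F (e z).1 (e z).2.1 * G (e z).1 (e z).2.2)
      =ᵐ[μQ] fun z => F' (e' z).1 (e' z).2.1 * G' (e' z).1 (e' z).2.2)
    (hint : Integrable (fun w : α × β × γ => F w.1 w.2.1 * G w.1 w.2.2) (μ.prod (ν.prod ρ))) :
    ∫ x, (∫ y, F x y ∂ν) * (∫ z, G x z ∂ρ) ∂μ =
      ∫ x, (∫ y, F' x y ∂ν') * (∫ z, G' x z ∂ρ') ∂μ' := by
  obtain ⟨hint', heq⟩ := integrable_and_integral_eq_of_comp_ae_eq
    (K := fun w : α' × β' × γ' => F' w.1 w.2.1 * G' w.1 w.2.2) he he_emb he' he'_emb h hint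
  rw [integral_mul_integral_eq_integral_prod F G hint, heq,
    integral_mul_integral_eq_integral_prod F' G' hint']

/-- For symmetric `f₁, f₃ ∈ L²(ν^{⊗p})` and `f₂, f₄ ∈ L²(ν^{⊗q})`,
assuming absolute convergence of the iterated integrals involved,
`⟨f₁ ⊗_r f₂, f₃ ⊗_r f₄⟩_{L²(T^{p+q−2r})} = ⟨f₁ ⊗_{p−r} f₃, f₂ ⊗_{q−r} f₄⟩_{L²(T^{2r})}`. -/
theorem stmt11 {T : Type*} [MeasurableSpace T] (ν : Measure T) [SigmaFinite ν]
    (p q r : ℕ) (hrp : r ≤ p) (hrq : r ≤ q)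
    (f₁ f₃ : (Fin p → T) → ℝ) (f₂ f₄ : (Fin q → T) → ℝ)
    (hs₁ : AESymmetric ν f₁) (hs₃ : AESymmetric ν f₃)
    (hs₂ : AESymmetric ν f₂) (hs₄ : AESymmetric ν f₄)
    -- absolute convergence of the iterated integrals:
    (habs : Integrable
      (fun w : ((Fin (p + q - 2 * r) → T) × (Fin r → T) × (Fin r → T)) =>
        f₁ (glueLeft p q r hrp hrq w.2.1 w.1) * f₂ (glueRight p q r hrp hrq w.2.1 w.1) *
        (f₃ (glueLeft p q r hrp hrq w.2.2 w.1) * f₄ (glueRight p q r hrp hrq w.2.2 w.1)))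
      ((Measure.pi fun _ : Fin (p + q - 2 * r) => ν).prod
        ((Measure.pi fun _ : Fin r => ν).prod (Measure.pi fun _ : Fin r => ν)))) :
    ∫ t : Fin (p + q - 2 * r) → T,
        contraction ν p q r hrp hrq f₁ f₂ t * contraction ν p q r hrp hrq f₃ f₄ t
        ∂(Measure.pi fun _ => ν)
      = ∫ s : Fin (2 * r) → T,
          contraction ν p p (p - r) (Nat.sub_le p r) (Nat.sub_le p r) f₁ f₃
            (fun i => s (Fin.cast (by omega) i)) *
          contraction ν q q (q - r) (Nat.sub_le q r) (Nat.sub_le q r) f₂ f₄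
            (fun i => s (Fin.cast (by omega) i))
          ∂(Measure.pi fun _ => ν) := by
  have hsplit_t := measurePreserving_piFinSplit ν (p - r) (q - r) (p + q - 2 * r) (by omega)
  have hsplit_s := measurePreserving_piFinSplit ν r r (2 * r) (by omega)
  refine integral_mul_integral_eq_of_comp_ae_eq
    ((hsplit_t.symm _).prod (.id _))
    ((MeasurableEquiv.measurableEmbedding _).prodMap .id)
    (((hsplit_s.symm _).prod (.id _)).comp Measure.measurePreserving_swap)
    (((MeasurableEquiv.measurableEmbedding _).prodMap .id).comp
      MeasurableEquiv.prodComm.measurableEmbedding)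
    ?_ habs
  filter_upwards [ae_eq_of_aeSymmetric_four_blocks (by omega) (by omega) (by omega) (by omega)
    hs₁ hs₃ hs₂ hs₄] with ⟨⟨w, x⟩, a, b⟩ h
  simpa only [Prod.map_apply, Function.comp_apply, Prod.swap_prod_mk, id,
    glueLeft_piFinSplit_symm, glueRight_piFinSplit_symm,
    glueLeft_sub_piFinSplit_symm hrp, glueRight_sub_piFinSplit_symm hrp,
    glueLeft_sub_piFinSplit_symm hrq, glueRight_sub_piFinSplit_symm hrq] using h
end

section
/- Let (T,ν) be a σ-finite measure space, let p, q ≥ 1 be integers and 1 ≤ r ≤ min(p,q). Let f ∈ L²(ν^{⊗p}) and g ∈ L²(ν^{⊗q}) be symmetric. Then ‖f ⊗_r g‖²_{L²(T^{p+q−2r})} ≤ ‖f ⊗_{p−r} f‖_{L²(T^{2r})} · ‖g ⊗_{q−r} g‖_{L²(T^{2r})}. In particular ‖f ⊗_r g‖²_{L²(T^{p+q−2r})} ≤ ‖f ⊗_{p−r} f‖_{L²(T^{2r})} · ‖g‖²_{L²(T^q)}. -/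
/-!
Split `T^p = T^r × T^{p-r}` and `T^q = T^r × T^{q-r}` and write `F(u, s) = f(u, s)`,
`G(u, v) = g(u, v)`. Then `f ⊗_r g` is the kernel `H(s, v) = ∫ F(u, s) G(u, v) du`. Expanding
`H(s, v)²` as an integral over `(u, u')` and integrating in `(s, v)` first (Fubini, justified by
Cauchy–Schwarz) gives `‖H‖² = ∫∫ CF(u, u') CG(u, u')` with the Gram kernels
`CF(u, u') = ∫ F(u, s) F(u', s) ds`, hence `‖H‖² ≤ ‖CF‖ ‖CG‖` by Cauchy–Schwarz. Since `f` is
symmetric, `CF` is `f ⊗_{p-r} f` after relabelling the variables, and `‖CG‖ ≤ ‖G‖²` by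
Cauchy–Schwarz in `v`.
-/

open MeasureTheory

open ENNReal

section Kernel

variable {A B C : Type*} [MeasurableSpace A] [MeasurableSpace B] [MeasurableSpace C]
  {μ : Measure A} {μ₁ : Measure B} {μ₂ : Measure C}

lemma sq_eLpNorm_two {E : Type*} [NormedAddCommGroup E] (f : A → E) :
    eLpNorm f 2 μ ^ 2 = ∫⁻ x, ‖f x‖ₑ ^ 2 ∂μ := by
  rw [eLpNorm_eq_lintegral_rpow_enorm_toReal two_ne_zero ofNat_ne_top, ← rpow_natCast,
    ← rpow_mul]
  norm_num

lemma lintegral_mul_sq_le {f g : A → ℝ≥0∞} (hf : AEMeasurable f μ) (hg : AEMeasurable g μ) :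
    (∫⁻ a, f a * g a ∂μ) ^ 2 ≤ (∫⁻ a, f a ^ 2 ∂μ) * ∫⁻ a, g a ^ 2 ∂μ := by
  have h := ENNReal.lintegral_mul_le_Lp_mul_Lq μ .two_two hf hg
  calc (∫⁻ a, f a * g a ∂μ) ^ 2
      ≤ ((∫⁻ a, f a ^ (2 : ℝ) ∂μ) ^ (1 / 2 : ℝ) * (∫⁻ a, g a ^ (2 : ℝ) ∂μ) ^ (1 / 2 : ℝ)) ^ 2 :=
        pow_le_pow_left' h 2
    _ = (∫⁻ a, f a ^ 2 ∂μ) * ∫⁻ a, g a ^ 2 ∂μ := by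
        rw [mul_pow, ← rpow_natCast, ← rpow_natCast, ← rpow_mul, ← rpow_mul]
        norm_num

noncomputable def kernelContraction (μ : Measure A) (F : A × B → ℝ) (G : A × C → ℝ) : B × C → ℝ :=
  fun sv => ∫ u, F (u, sv.1) * G (u, sv.2) ∂μ

noncomputable def gramKernel (μ₁ : Measure B) (F : A × B → ℝ) : A × A → ℝ :=
  fun uu => ∫ s, F (uu.1, s) * F (uu.2, s) ∂μ₁

variable [SFinite μ₁]

lemma gramKernel_congr_ae {F F' : A × B → ℝ} (hF : F =ᵐ[μ.prod μ₁] F') :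
    gramKernel μ₁ F =ᵐ[μ.prod μ] gramKernel μ₁ F' := by
  have hslice := Measure.ae_ae_of_ae_prod hF
  filter_upwards [Measure.quasiMeasurePreserving_fst.ae hslice,
    Measure.quasiMeasurePreserving_snd.ae hslice] with uu h₁ h₂
  refine integral_congr_ae ?_
  filter_upwards [h₁, h₂] with s e₁ e₂
  rw [e₁, e₂]

lemma aestronglyMeasurable_gramKernel {F : A × B → ℝ} (hF : Measurable F) :
    AEStronglyMeasurable (gramKernel μ₁ F) (μ.prod μ) :=
  (Measurable.stronglyMeasurable (by fun_prop) :
    StronglyMeasurable fun z : (A × A) × B => F (z.1.1, z.2) * F (z.1.2, z.2))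
    |>.integral_prod_right'.aestronglyMeasurable

variable [SFinite μ] [SFinite μ₂]

lemma ae_ae_of_ae_prod_swap {P : A × B → Prop} (h : ∀ᵐ z ∂μ.prod μ₁, P z) :
    ∀ᵐ s ∂μ₁, ∀ᵐ u ∂μ, P (u, s) :=
  Measure.ae_ae_of_ae_prod (Measure.measurePreserving_swap.quasiMeasurePreserving.ae h)

lemma kernelContraction_congr_ae {F F' : A × B → ℝ} {G G' : A × C → ℝ}
    (hF : F =ᵐ[μ.prod μ₁] F') (hG : G =ᵐ[μ.prod μ₂] G') :
    kernelContraction μ F G =ᵐ[μ₁.prod μ₂] kernelContraction μ F' G' := by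
  filter_upwards [Measure.quasiMeasurePreserving_fst.ae (ae_ae_of_ae_prod_swap hF),
    Measure.quasiMeasurePreserving_snd.ae (ae_ae_of_ae_prod_swap hG)] with sv hFsv hGsv
  refine integral_congr_ae ?_
  filter_upwards [hFsv, hGsv] with u hFu hGu
  rw [hFu, hGu]

lemma lintegral_lintegral_enorm_mul_sq_le {F : A × B → ℝ} (hF : Measurable F) :
    ∫⁻ uu : A × A, (∫⁻ s, ‖F (uu.1, s)‖ₑ * ‖F (uu.2, s)‖ₑ ∂μ₁) ^ 2 ∂(μ.prod μ)
      ≤ eLpNorm F 2 (μ.prod μ₁) ^ 4 := by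
  set m : A → ℝ≥0∞ := fun u => ∫⁻ s, ‖F (u, s)‖ₑ ^ 2 ∂μ₁
  have hm : Measurable m := (hF.enorm.pow_const 2).lintegral_prod_right'
  have hmass : ∫⁻ u, m u ∂μ = eLpNorm F 2 (μ.prod μ₁) ^ 2 := by
    rw [sq_eLpNorm_two, lintegral_prod _ (hF.enorm.pow_const 2).aemeasurable]
  calc _ ≤ ∫⁻ uu : A × A, m uu.1 * m uu.2 ∂(μ.prod μ) :=
        lintegral_mono fun uu => lintegral_mul_sq_le (by fun_prop) (by fun_prop)
    _ = (∫⁻ u, m u ∂μ) * ∫⁻ u, m u ∂μ := lintegral_prod_mul hm.aemeasurable hm.aemeasurable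
    _ = _ := by rw [hmass, ← pow_add]

lemma eLpNorm_gramKernel_le_of_measurable {F : A × B → ℝ} (hF : Measurable F) :
    eLpNorm (gramKernel μ₁ F) 2 (μ.prod μ) ≤ eLpNorm F 2 (μ.prod μ₁) ^ 2 := by
  rw [← ENNReal.pow_le_pow_left_iff two_ne_zero, sq_eLpNorm_two, ← pow_mul]
  refine le_trans (lintegral_mono fun uu => ?_) (lintegral_lintegral_enorm_mul_sq_le hF)
  gcongr
  simpa only [gramKernel, enorm_mul] using
    enorm_integral_le_lintegral_enorm (μ := μ₁) fun s => F (uu.1, s) * F (uu.2, s)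

lemma eLpNorm_gramKernel_le {F : A × B → ℝ} (hF : AEStronglyMeasurable F (μ.prod μ₁)) :
    eLpNorm (gramKernel μ₁ F) 2 (μ.prod μ) ≤ eLpNorm F 2 (μ.prod μ₁) ^ 2 := by
  rw [eLpNorm_congr_ae (gramKernel_congr_ae hF.ae_eq_mk), eLpNorm_congr_ae hF.ae_eq_mk]
  exact eLpNorm_gramKernel_le_of_measurable hF.stronglyMeasurable_mk.measurable

lemma integrable_gramKernel_integrand {F : A × B → ℝ} {G : A × C → ℝ}
    (hFm : Measurable F) (hGm : Measurable G)
    (hF : eLpNorm F 2 (μ.prod μ₁) < ⊤) (hG : eLpNorm G 2 (μ.prod μ₂) < ⊤) :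
    Integrable (fun z : (A × A) × (B × C) =>
      F (z.1.1, z.2.1) * F (z.1.2, z.2.1) * (G (z.1.1, z.2.2) * G (z.1.2, z.2.2)))
      ((μ.prod μ).prod (μ₁.prod μ₂)) := by
  refine ⟨(by fun_prop : Measurable _).aestronglyMeasurable, hasFiniteIntegral_iff_enorm.2 ?_⟩
  set IF : A × A → ℝ≥0∞ := fun uu => ∫⁻ s, ‖F (uu.1, s)‖ₑ * ‖F (uu.2, s)‖ₑ ∂μ₁
  set IG : A × A → ℝ≥0∞ := fun uu => ∫⁻ v, ‖G (uu.1, v)‖ₑ * ‖G (uu.2, v)‖ₑ ∂μ₂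
  have hIF : Measurable IF :=
    (by fun_prop : Measurable fun z : (A × A) × B => ‖F (z.1.1, z.2)‖ₑ * ‖F (z.1.2, z.2)‖ₑ)
      |>.lintegral_prod_right'
  have hIG : Measurable IG :=
    (by fun_prop : Measurable fun z : (A × A) × C => ‖G (z.1.1, z.2)‖ₑ * ‖G (z.1.2, z.2)‖ₑ)
      |>.lintegral_prod_right'
  have hsplit : ∫⁻ z : (A × A) × (B × C),
      ‖F (z.1.1, z.2.1) * F (z.1.2, z.2.1) * (G (z.1.1, z.2.2) * G (z.1.2, z.2.2))‖ₑ
        ∂((μ.prod μ).prod (μ₁.prod μ₂)) = ∫⁻ uu, IF uu * IG uu ∂(μ.prod μ) := by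
    rw [lintegral_prod _ (by fun_prop)]
    refine lintegral_congr fun uu => ?_
    rw [← lintegral_prod_mul (by fun_prop) (by fun_prop)]
    simp only [enorm_mul]
  have hsq : (∫⁻ uu, IF uu * IG uu ∂(μ.prod μ)) ^ 2 < ⊤ :=
    calc _ ≤ (∫⁻ uu, IF uu ^ 2 ∂(μ.prod μ)) * ∫⁻ uu, IG uu ^ 2 ∂(μ.prod μ) :=
          lintegral_mul_sq_le hIF.aemeasurable hIG.aemeasurable
      _ ≤ eLpNorm F 2 (μ.prod μ₁) ^ 4 * eLpNorm G 2 (μ.prod μ₂) ^ 4 :=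
          mul_le_mul' (lintegral_lintegral_enorm_mul_sq_le hFm)
            (lintegral_lintegral_enorm_mul_sq_le hGm)
      _ < ⊤ := mul_lt_top (pow_lt_top hF) (pow_lt_top hG)
  rw [hsplit]
  simpa using hsq

lemma sq_eLpNorm_kernelContraction_le_of_measurable {F : A × B → ℝ} {G : A × C → ℝ}
    (hFm : Measurable F) (hGm : Measurable G)
    (hF : eLpNorm F 2 (μ.prod μ₁) < ⊤) (hG : eLpNorm G 2 (μ.prod μ₂) < ⊤) :
    eLpNorm (kernelContraction μ F G) 2 (μ₁.prod μ₂) ^ 2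
      ≤ eLpNorm (gramKernel μ₁ F) 2 (μ.prod μ) * eLpNorm (gramKernel μ₂ G) 2 (μ.prod μ) := by
  set Φ : (A × A) × (B × C) → ℝ := fun z =>
    F (z.1.1, z.2.1) * F (z.1.2, z.2.1) * (G (z.1.1, z.2.2) * G (z.1.2, z.2.2))
  have hΦ : Integrable Φ ((μ.prod μ).prod (μ₁.prod μ₂)) :=
    integrable_gramKernel_integrand hFm hGm hF hG
  have hsq : ∀ sv, ∫ uu, Φ (uu, sv) ∂(μ.prod μ) = kernelContraction μ F G sv ^ 2 := by
    intro sv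
    rw [sq, kernelContraction, ← integral_prod_mul]
    exact integral_congr_ae (.of_forall fun uu => by simp only [Φ]; ring)
  have hgram : ∀ uu, ∫ sv, Φ (uu, sv) ∂(μ₁.prod μ₂) = gramKernel μ₁ F uu * gramKernel μ₂ G uu :=
    fun uu => integral_prod_mul (fun s => F (uu.1, s) * F (uu.2, s))
      (fun v => G (uu.1, v) * G (uu.2, v))
  calc eLpNorm (kernelContraction μ F G) 2 (μ₁.prod μ₂) ^ 2
      = ∫⁻ sv, ENNReal.ofReal (∫ uu, Φ (uu, sv) ∂(μ.prod μ)) ∂(μ₁.prod μ₂) := by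
        rw [sq_eLpNorm_two]
        refine lintegral_congr fun sv => ?_
        rw [hsq, Real.enorm_eq_ofReal_abs, ← ofReal_pow (abs_nonneg _), sq_abs]
    _ = ENNReal.ofReal (∫ sv, ∫ uu, Φ (uu, sv) ∂(μ.prod μ) ∂(μ₁.prod μ₂)) :=
        (ofReal_integral_eq_lintegral_ofReal hΦ.integral_prod_right
          (.of_forall fun sv => by simp only [Pi.zero_apply, hsq]; positivity)).symm
    _ = ENNReal.ofReal (∫ uu, gramKernel μ₁ F uu * gramKernel μ₂ G uu ∂(μ.prod μ)) := by
        rw [← integral_integral_swap (f := fun uu sv => Φ (uu, sv)) hΦ]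
        simp only [hgram]
    _ ≤ ∫⁻ uu, ‖gramKernel μ₁ F uu * gramKernel μ₂ G uu‖ₑ ∂(μ.prod μ) :=
        (Real.ofReal_le_enorm _).trans (enorm_integral_le_lintegral_enorm _)
    _ ≤ eLpNorm (gramKernel μ₁ F) 2 (μ.prod μ) * eLpNorm (gramKernel μ₂ G) 2 (μ.prod μ) := by
        rw [← eLpNorm_one_eq_lintegral_enorm]
        simpa using eLpNorm_le_eLpNorm_mul_eLpNorm_of_nnnorm (p := 2) (q := 2)
          (aestronglyMeasurable_gramKernel hFm) (aestronglyMeasurable_gramKernel hGm) (· * ·) 1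
          (.of_forall fun _ => by simp [nnnorm_mul])

lemma sq_eLpNorm_kernelContraction_le {F : A × B → ℝ} {G : A × C → ℝ}
    (hF : MemLp F 2 (μ.prod μ₁)) (hG : MemLp G 2 (μ.prod μ₂)) :
    eLpNorm (kernelContraction μ F G) 2 (μ₁.prod μ₂) ^ 2
      ≤ eLpNorm (gramKernel μ₁ F) 2 (μ.prod μ) * eLpNorm (gramKernel μ₂ G) 2 (μ.prod μ) := by
  rw [eLpNorm_congr_ae (kernelContraction_congr_ae hF.1.ae_eq_mk hG.1.ae_eq_mk),
    eLpNorm_congr_ae (gramKernel_congr_ae hF.1.ae_eq_mk),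
    eLpNorm_congr_ae (gramKernel_congr_ae hG.1.ae_eq_mk)]
  exact sq_eLpNorm_kernelContraction_le_of_measurable hF.1.stronglyMeasurable_mk.measurable
    hG.1.stronglyMeasurable_mk.measurable (hF.ae_eq hF.1.ae_eq_mk).2 (hG.ae_eq hG.1.ae_eq_mk).2

end Kernel

section Coordinates

variable {T : Type*} [MeasurableSpace T]

def glueEquiv (m n k : ℕ) (h : m + n = k) : ((Fin m → T) × (Fin n → T)) ≃ᵐ (Fin k → T) :=
  (MeasurableEquiv.sumPiEquivProdPi fun _ => T).symm.trans
    (MeasurableEquiv.piCongrLeft (fun _ => T) (finSumFinEquiv.trans (finCongr h)))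

lemma glueEquiv_apply {m n k : ℕ} (h : m + n = k) (z : (Fin m → T) × (Fin n → T)) (i : Fin k) :
    glueEquiv m n k h z i = if hi : (i : ℕ) < m then z.1 ⟨i, hi⟩ else z.2 ⟨i - m, by omega⟩ := by
  obtain ⟨j, rfl⟩ := (finSumFinEquiv.trans (finCongr h)).surjective i
  simp only [glueEquiv, MeasurableEquiv.trans_apply, MeasurableEquiv.coe_piCongrLeft,
    Equiv.piCongrLeft_apply_apply]
  rcases j with j | j <;> simp [MeasurableEquiv.sumPiEquivProdPi]

lemma measurePreserving_glueEquiv (ν : Measure T) [SigmaFinite ν] {m n k : ℕ} (h : m + n = k) :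
    MeasurePreserving (glueEquiv m n k h)
      ((Measure.pi fun _ : Fin m => ν).prod (Measure.pi fun _ : Fin n => ν))
      (Measure.pi fun _ : Fin k => ν) :=
  (measurePreserving_piCongrLeft (fun _ => ν) _).comp
    (measurePreserving_sumPiEquivProdPi_symm fun _ => ν)

lemma glueEquiv_swap_comp_finAddFlip {m n k : ℕ} (h : m + n = k) (h' : n + m = k)
    (u : Fin m → T) (s : Fin n → T) :
    glueEquiv n m k h' (s, u) ∘ (finCongr h.symm).trans (finAddFlip.trans (finCongr h'))
      = glueEquiv m n k h (u, s) := by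
  funext ⟨i, hi⟩
  by_cases him : i < m
  · simp [glueEquiv_apply, him]
  · have hin : i - m < n := by omega
    simp [glueEquiv_apply, him, hin, Nat.le_of_not_lt him]

lemma glueLeft_glueEquiv {p q r a b : ℕ} (hrp : r ≤ p) (hrq : r ≤ q) (ha : r + a = p)
    (hk : a + b = p + q - 2 * r) (u : Fin r → T) (s : Fin a → T) (v : Fin b → T) :
    glueLeft p q r hrp hrq u (glueEquiv a b _ hk (s, v)) = glueEquiv r a p ha (u, s) := by
  funext ⟨i, hi⟩
  by_cases hir : i < r
  · simp [glueLeft, glueEquiv_apply, hir]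
  · have hia : i - r < a := by omega
    simp [glueLeft, glueEquiv_apply, hir, hia]

lemma glueRight_glueEquiv {p q r a b : ℕ} (hrp : r ≤ p) (hrq : r ≤ q) (ha : r + a = p)
    (hb : r + b = q) (hk : a + b = p + q - 2 * r) (u : Fin r → T) (s : Fin a → T)
    (v : Fin b → T) :
    glueRight p q r hrp hrq u (glueEquiv a b _ hk (s, v)) = glueEquiv r b q hb (u, v) := by
  funext ⟨j, hj⟩
  by_cases hjr : j < r
  · simp [glueRight, glueEquiv_apply, hjr]
  · have h₁ : ¬ p - r + (j - r) < a := by omega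
    have h₂ : p - r + (j - r) - a = j - r := by omega
    simp [glueRight, glueEquiv_apply, hjr, h₁, h₂]

variable (ν : Measure T)

lemma contraction_comp_glueEquiv {p q r a b : ℕ} (hrp : r ≤ p) (hrq : r ≤ q) (ha : r + a = p)
    (hb : r + b = q) (hk : a + b = p + q - 2 * r) (f : (Fin p → T) → ℝ) (g : (Fin q → T) → ℝ) :
    contraction ν p q r hrp hrq f g ∘ glueEquiv a b _ hk
      = kernelContraction (Measure.pi fun _ => ν) (f ∘ glueEquiv r a p ha)
          (g ∘ glueEquiv r b q hb) := by
  funext sv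
  simp only [Function.comp_apply, contraction, kernelContraction,
    glueLeft_glueEquiv hrp hrq ha hk, glueRight_glueEquiv hrp hrq ha hb hk]

variable [SigmaFinite ν]

lemma eLpNorm_comp_glueEquiv {E : Type*} [NormedAddCommGroup E] {m n k : ℕ} (h : m + n = k)
    (φ : (Fin k → T) → E) (p : ℝ≥0∞) :
    eLpNorm (φ ∘ glueEquiv m n k h) p
        ((Measure.pi fun _ : Fin m => ν).prod (Measure.pi fun _ : Fin n => ν))
      = eLpNorm φ p (Measure.pi fun _ => ν) := by
  rw [← (glueEquiv m n k h).measurableEmbedding.eLpNorm_map_measure,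
    (measurePreserving_glueEquiv ν h).map_eq]

lemma eLpNorm_contraction_eq {p q r a b : ℕ} (hrp : r ≤ p) (hrq : r ≤ q) (ha : r + a = p)
    (hb : r + b = q) (hk : a + b = p + q - 2 * r) (f : (Fin p → T) → ℝ) (g : (Fin q → T) → ℝ) :
    eLpNorm (contraction ν p q r hrp hrq f g) 2 (Measure.pi fun _ => ν)
      = eLpNorm (kernelContraction (Measure.pi fun _ => ν) (f ∘ glueEquiv r a p ha)
          (g ∘ glueEquiv r b q hb)) 2
          ((Measure.pi fun _ : Fin a => ν).prod (Measure.pi fun _ : Fin b => ν)) := by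
  rw [← contraction_comp_glueEquiv ν hrp hrq ha hb hk, eLpNorm_comp_glueEquiv]

lemma contraction_congr_ae {p q r : ℕ} (hrp : r ≤ p) (hrq : r ≤ q) {f f' : (Fin p → T) → ℝ}
    {g g' : (Fin q → T) → ℝ} (hf : f =ᵐ[Measure.pi fun _ => ν] f')
    (hg : g =ᵐ[Measure.pi fun _ => ν] g') :
    contraction ν p q r hrp hrq f g
      =ᵐ[Measure.pi fun _ => ν] contraction ν p q r hrp hrq f' g' := by
  have ha : r + (p - r) = p := by omega
  have hb : r + (q - r) = q := by omega
  have hk : (p - r) + (q - r) = p + q - 2 * r := by omega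
  have hglued := kernelContraction_congr_ae
    ((measurePreserving_glueEquiv ν ha).quasiMeasurePreserving.ae_eq hf)
    ((measurePreserving_glueEquiv ν hb).quasiMeasurePreserving.ae_eq hg)
  rw [← contraction_comp_glueEquiv ν hrp hrq ha hb hk,
    ← contraction_comp_glueEquiv ν hrp hrq ha hb hk] at hglued
  rw [Filter.EventuallyEq, ← (measurePreserving_glueEquiv ν hk).map_eq,
    (glueEquiv _ _ _ hk).measurableEmbedding.ae_map_iff]
  exact hglued

-- `f ⊗_{p-r} f` integrates out the first `p - r` variables and the Gram kernel the last `p - r`;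
-- the block swap `finAddFlip` exchanges the two and `f` is invariant under it.
lemma AESymmetric.eLpNorm_contraction_self_eq {p r : ℕ} (hrp : r ≤ p) {f : (Fin p → T) → ℝ}
    (hfs : AESymmetric ν f) :
    eLpNorm (contraction ν p p (p - r) (Nat.sub_le p r) (Nat.sub_le p r) f f) 2
        (Measure.pi fun _ => ν)
      = eLpNorm (gramKernel (Measure.pi fun _ : Fin (p - r) => ν)
          (f ∘ glueEquiv r (p - r) p (by omega))) 2
          ((Measure.pi fun _ : Fin r => ν).prod (Measure.pi fun _ : Fin r => ν)) := by
  have ha : r + (p - r) = p := by omega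
  have hc : (p - r) + r = p := by omega
  have hσ := hfs ((finCongr ha.symm).trans (finAddFlip.trans (finCongr hc)))
  rw [← eLpNorm_congr_ae (contraction_congr_ae ν _ _ hσ hσ),
    eLpNorm_contraction_eq ν _ _ hc hc (by omega)]
  have hswap : (fun x => f (x ∘ (finCongr ha.symm).trans (finAddFlip.trans (finCongr hc))))
      ∘ glueEquiv (p - r) r p hc = (f ∘ glueEquiv r (p - r) p ha) ∘ Prod.swap := by
    funext z
    simp only [Function.comp_apply, Prod.swap, glueEquiv_swap_comp_finAddFlip ha hc]
  rw [hswap]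
  rfl

end Coordinates

theorem stmt12_general {T : Type*} [MeasurableSpace T] (ν : Measure T) [SigmaFinite ν]
    (p q r : ℕ) (hrp : r ≤ p) (hrq : r ≤ q)
    (f : (Fin p → T) → ℝ) (g : (Fin q → T) → ℝ)
    (hf : MemLp f 2 (Measure.pi fun _ : Fin p => ν))
    (hg : MemLp g 2 (Measure.pi fun _ : Fin q => ν))
    (hfs : AESymmetric ν f) (hgs : AESymmetric ν g) :
    eLpNorm (contraction ν p q r hrp hrq f g) 2 (Measure.pi fun _ => ν) ^ 2
        ≤ eLpNorm (contraction ν p p (p - r) (Nat.sub_le p r) (Nat.sub_le p r) f f) 2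
            (Measure.pi fun _ => ν)
          * eLpNorm (contraction ν q q (q - r) (Nat.sub_le q r) (Nat.sub_le q r) g g) 2
            (Measure.pi fun _ => ν)
      ∧
    eLpNorm (contraction ν p q r hrp hrq f g) 2 (Measure.pi fun _ => ν) ^ 2
        ≤ eLpNorm (contraction ν p p (p - r) (Nat.sub_le p r) (Nat.sub_le p r) f f) 2
            (Measure.pi fun _ => ν)
          * eLpNorm g 2 (Measure.pi fun _ : Fin q => ν) ^ 2 := by
  have ha : r + (p - r) = p := by omega
  have hb : r + (q - r) = q := by omega
  have hF := hf.comp_measurePreserving (measurePreserving_glueEquiv ν ha)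
  have hG := hg.comp_measurePreserving (measurePreserving_glueEquiv ν hb)
  have hmain := sq_eLpNorm_kernelContraction_le hF hG
  rw [eLpNorm_contraction_eq ν hrp hrq ha hb (by omega), hfs.eLpNorm_contraction_self_eq ν hrp,
    hgs.eLpNorm_contraction_self_eq ν hrq, ← eLpNorm_comp_glueEquiv ν hb g]
  exact ⟨hmain, hmain.trans (mul_le_mul' le_rfl (eLpNorm_gramKernel_le hG.1))⟩

/-- For symmetric `f ∈ L²(ν^{⊗p})`, `g ∈ L²(ν^{⊗q})` and `1 ≤ r ≤ min(p,q)`,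
`‖f ⊗_r g‖² ≤ ‖f ⊗_{p−r} f‖ ⬝ ‖g ⊗_{q−r} g‖`, and in particular
`‖f ⊗_r g‖² ≤ ‖f ⊗_{p−r} f‖ ⬝ ‖g‖²`. -/
theorem stmt12 {T : Type*} [MeasurableSpace T] (ν : Measure T) [SigmaFinite ν]
    (p q r : ℕ) (hp : 1 ≤ p) (hq : 1 ≤ q) (hr : 1 ≤ r) (hrp : r ≤ p) (hrq : r ≤ q)
    (f : (Fin p → T) → ℝ) (g : (Fin q → T) → ℝ)
    (hf : MemLp f 2 (Measure.pi fun _ : Fin p => ν))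
    (hg : MemLp g 2 (Measure.pi fun _ : Fin q => ν))
    (hfs : AESymmetric ν f) (hgs : AESymmetric ν g) :
    eLpNorm (contraction ν p q r hrp hrq f g) 2 (Measure.pi fun _ => ν) ^ 2
        ≤ eLpNorm (contraction ν p p (p - r) (Nat.sub_le p r) (Nat.sub_le p r) f f) 2
            (Measure.pi fun _ => ν)
          * eLpNorm (contraction ν q q (q - r) (Nat.sub_le q r) (Nat.sub_le q r) g g) 2
            (Measure.pi fun _ => ν)
      ∧
    eLpNorm (contraction ν p q r hrp hrq f g) 2 (Measure.pi fun _ => ν) ^ 2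
        ≤ eLpNorm (contraction ν p p (p - r) (Nat.sub_le p r) (Nat.sub_le p r) f f) 2
            (Measure.pi fun _ => ν)
          * eLpNorm g 2 (Measure.pi fun _ : Fin q => ν) ^ 2 :=
  stmt12_general ν p q r hrp hrq f g hf hg hfs hgs
end
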